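/- arXiv:1310.1777 — 6 statements merged into one kernel-verified Lean document; each statement's English description precedes it below -/
import Mathlib

section
/- In a procurement auction instance, the total VCG overpayment Σ_{a∈S*} p(a) equals Σ_{a∈A} (v(I,a) − c(a))_+ and hence does not depend on the choice of minimum structure S*. -/
open MeasureTheory ProbabilityTheory ENNReal
open scoped BigOperators

variable {A : Type*} [Fintype A] [DecidableEq A]

/-- The nominal cost of a structure `S`: the sum of the item costs. -/
noncomputable def structCost (c : A → ℝ≥0∞) (S : Finset A) : ℝ≥0∞ :=
  ∑ a ∈ S, c a

/-- The minimum cost `c*(I)` over all desired structures. -/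
noncomputable def cstar (SS : Finset (Finset A)) (c : A → ℝ≥0∞) : ℝ≥0∞ :=
  ⨅ S ∈ SS, structCost c S

/-- The VCG threshold `v(I,a) = c*(I_a^∞) - c*(I_a^0)`. -/
noncomputable def vth (SS : Finset (Finset A)) (c : A → ℝ≥0∞) (a : A) : ℝ≥0∞ :=
  cstar SS (Function.update c a ⊤) - cstar SS (Function.update c a 0)

/-- The incentive payment `p(a) = c*(I_a^∞) - c*(I)`. -/
noncomputable def pay (SS : Finset (Finset A)) (c : A → ℝ≥0∞) (a : A) : ℝ≥0∞ :=
  cstar SS (Function.update c a ⊤) - cstar SS c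

/-- `S` is a minimum structure. -/
def IsMinStruct (SS : Finset (Finset A)) (c : A → ℝ≥0∞) (S : Finset A) : Prop :=
  S ∈ SS ∧ ∀ T ∈ SS, structCost c S ≤ structCost c T

/-- The total VCG cost `C_VCG = C* + Σ_a p(a)`. -/
noncomputable def cvcg (SS : Finset (Finset A)) (c : A → ℝ≥0∞) : ℝ≥0∞ :=
  cstar SS c + ∑ a, pay SS c a

lemma cstar_le_mem {SS : Finset (Finset A)} {c : A → ℝ≥0∞} {T : Finset A} (hT : T ∈ SS) :
    cstar SS c ≤ structCost c T := iInf₂_le T hT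

lemma cstar_eq_min {SS : Finset (Finset A)} {c : A → ℝ≥0∞} {S : Finset A}
    (hS : IsMinStruct SS c S) : cstar SS c = structCost c S :=
  le_antisymm (cstar_le_mem hS.1) (le_iInf₂ fun T hT => hS.2 T hT)

lemma exists_minStruct (SS : Finset (Finset A)) (hSS : SS.Nonempty) (c : A → ℝ≥0∞) :
    ∃ S, IsMinStruct SS c S := by
  obtain ⟨S, hS, h⟩ := SS.exists_min_image (structCost c) hSS
  exact ⟨S, hS, h⟩

lemma structCost_le_update_zero_add (c : A → ℝ≥0∞) (a : A) (T : Finset A) :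
    structCost c T ≤ structCost (Function.update c a 0) T + c a := by
  unfold structCost
  calc ∑ b ∈ T, c b
      = ∑ b ∈ T, (Function.update c a 0 b + if b = a then c a else 0) := by
        refine Finset.sum_congr rfl fun b _ => ?_
        by_cases hb : b = a
        · subst hb; simp
        · simp [Function.update_of_ne hb, hb]
    _ = ∑ b ∈ T, Function.update c a 0 b + ∑ b ∈ T, (if b = a then c a else 0) := by
        rw [Finset.sum_add_distrib]
    _ ≤ ∑ b ∈ T, Function.update c a 0 b + c a := by
        gcongr
        rw [Finset.sum_ite_eq' T a (fun _ => c a)]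
        split <;> simp

lemma cstar_le_update_zero_add (SS : Finset (Finset A)) (hSS : SS.Nonempty)
    (c : A → ℝ≥0∞) (a : A) :
    cstar SS c ≤ cstar SS (Function.update c a 0) + c a := by
  obtain ⟨T, hT⟩ := exists_minStruct SS hSS (Function.update c a 0)
  calc cstar SS c ≤ structCost c T := cstar_le_mem hT.1
    _ ≤ structCost (Function.update c a 0) T + c a := structCost_le_update_zero_add c a T
    _ = cstar SS (Function.update c a 0) + c a := by rw [cstar_eq_min hT]

/-- The total VCG overpayment `Σ_{a ∈ S*} p(a)` equals
`Σ_{a ∈ A} (v(I,a) - c(a))₊`, for any minimum structure `S*`; in particular it does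
not depend on the choice of minimum structure. (In `ℝ≥0∞`, truncated subtraction
realizes the positive part.) -/
theorem vcg_overpayment_eq
    (SS : Finset (Finset A)) (hSS : SS.Nonempty)
    (c : A → ℝ≥0∞) (hc : ∀ a, c a ≠ ⊤)
    (Sstar : Finset A) (hS : IsMinStruct SS c Sstar) :
    ∑ a ∈ Sstar, pay SS c a = ∑ a : A, (vth SS c a - c a) := by
  have hcs : cstar SS c = structCost c Sstar := cstar_eq_min hS
  rw [← Finset.sum_add_sum_compl Sstar (fun a => vth SS c a - c a)]
  have h0 : ∑ a ∈ Sstarᶜ, (vth SS c a - c a) = 0 := by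
    refine Finset.sum_eq_zero fun a ha => ?_
    have ha' : a ∉ Sstar := by simpa using ha
    refine tsub_eq_zero_of_le ?_
    unfold vth
    rw [tsub_le_iff_right]
    have h1 : structCost (Function.update c a ⊤) Sstar = structCost c Sstar := by
      refine Finset.sum_congr rfl fun b hb => ?_
      exact Function.update_of_ne (by rintro rfl; exact ha' hb) _ _
    calc cstar SS (Function.update c a ⊤)
        ≤ structCost (Function.update c a ⊤) Sstar := cstar_le_mem hS.1
      _ = cstar SS c := by rw [h1, hcs]
      _ ≤ cstar SS (Function.update c a 0) + c a := cstar_le_update_zero_add SS hSS c a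
      _ = c a + cstar SS (Function.update c a 0) := add_comm _ _
  rw [h0, add_zero]
  refine Finset.sum_congr rfl fun a ha => ?_
  have hkey : cstar SS (Function.update c a 0) + c a = cstar SS c := by
    refine le_antisymm ?_ (cstar_le_update_zero_add SS hSS c a)
    have h1 : structCost (Function.update c a 0) Sstar + c a = structCost c Sstar := by
      unfold structCost
      rw [Finset.sum_update_of_mem ha, zero_add, Finset.sdiff_singleton_eq_erase,
        add_comm, Finset.add_sum_erase _ c ha]
    calc cstar SS (Function.update c a 0) + c a
        ≤ structCost (Function.update c a 0) Sstar + c a := by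
          gcongr; exact cstar_le_mem hS.1
      _ = cstar SS c := by rw [h1, hcs]
  unfold pay vth
  rw [tsub_tsub, hkey]
end

section
/- For a bridgeless matroid M with costs c(a) i.i.d. uniform on (0,1), the VCG threshold v(I,a) of any element a is at most 1, and consequently E[C_VCG] = 2 E[C*]. -/
open MeasureTheory ProbabilityTheory ENNReal
open scoped BigOperators

variable {A : Type*} [Fintype A] [DecidableEq A]

/-- A matroid on finite ground set `A`, given by its rank function. -/
structure RankMatroid (A : Type*) [Fintype A] [DecidableEq A] where
  rk : Finset A → ℕ
  rk_le_card : ∀ S : Finset A, rk S ≤ S.card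
  rk_mono : ∀ ⦃S T : Finset A⦄, S ⊆ T → rk S ≤ rk T
  rk_submodular : ∀ S T : Finset A, rk (S ∪ T) + rk (S ∩ T) ≤ rk S + rk T

namespace RankMatroid

variable {A : Type*} [Fintype A] [DecidableEq A]

/-- The collection of bases of the matroid. -/
noncomputable def bases (M : RankMatroid A) : Finset (Finset A) :=
  Finset.univ.filter (fun S => M.rk S = S.card ∧ M.rk S = M.rk Finset.univ)

/-- A set is independent if its rank equals its cardinality. -/
def Indep (M : RankMatroid A) (S : Finset A) : Prop := M.rk S = S.card

/-- A matroid is bridgeless if no single element removal decreases the rank of the ground set. -/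
def Bridgeless (M : RankMatroid A) : Prop :=
  ∀ a : A, M.rk (Finset.univ.erase a) = M.rk Finset.univ

/-- `β(S)`: the number of bridges in `S`. -/
def beta (M : RankMatroid A) (S : Finset A) : ℕ :=
  (S.filter (fun a => M.rk (S.erase a) < M.rk S)).card

end RankMatroid

/-- `A(t)`: the set of items with cost at most `t`. -/
noncomputable def Aset {A : Type*} [Fintype A] [DecidableEq A] (c : A → ℝ) (t : ℝ) : Finset A :=
  Finset.univ.filter (fun a => c a ≤ t)


set_option linter.unusedSectionVars false
set_option maxHeartbeats 1000000

section AuxDet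

-- auxiliary
lemma structCost_update_not_mem {c : A → ℝ≥0∞} {S : Finset A} {a : A} (h : a ∉ S) (v : ℝ≥0∞) :
    structCost (Function.update c a v) S = structCost c S :=
  Finset.sum_congr rfl fun b hb => Function.update_of_ne (ne_of_mem_of_not_mem hb h) _ _

lemma structCost_update_top_of_mem {c : A → ℝ≥0∞} {S : Finset A} {a : A} (h : a ∈ S) :
    structCost (Function.update c a ⊤) S = ⊤ :=
  eq_top_iff.mpr <| le_trans (by simp) (Finset.single_le_sum (f := Function.update c a ⊤)
    (fun i _ => zero_le) h)

lemma structCost_eq_add_update_zero {c : A → ℝ≥0∞} {S : Finset A} {a : A} (h : a ∈ S) :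
    structCost c S = c a + structCost (Function.update c a 0) S := by
  have h1 : structCost (Function.update c a 0) S = ∑ b ∈ S.erase a, c b := by
    rw [structCost, ← Finset.add_sum_erase _ _ h, Function.update_self, zero_add]
    exact Finset.sum_congr rfl fun b hb =>
      Function.update_of_ne (Finset.ne_of_mem_erase hb) _ _
  rw [h1, structCost, ← Finset.add_sum_erase _ _ h]

noncomputable def Dmin (SS : Finset (Finset A)) (c : A → ℝ≥0∞) (a : A) : ℝ≥0∞ :=
  (SS.filter (fun S => a ∉ S)).inf (structCost c)

noncomputable def Mmin (SS : Finset (Finset A)) (c : A → ℝ≥0∞) (a : A) : ℝ≥0∞ :=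
  (SS.filter (fun S => a ∈ S)).inf (structCost (Function.update c a 0))

lemma cstar_eq_inf (SS : Finset (Finset A)) (c : A → ℝ≥0∞) :
    cstar SS c = SS.inf (structCost c) := by
  rw [cstar, Finset.inf_eq_iInf]

lemma inf_split (SS : Finset (Finset A)) (f : Finset A → ℝ≥0∞) (a : A) :
    SS.inf f = (SS.filter (fun S => a ∉ S)).inf f ⊓ (SS.filter (fun S => a ∈ S)).inf f := by
  conv_lhs => rw [← Finset.filter_union_filter_not_eq (fun S => a ∉ S) SS]
  rw [Finset.inf_union]
  congr 2
  ext S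
  simp

lemma finset_inf_const_add (t : Finset (Finset A)) (x : ℝ≥0∞) (m : Finset A → ℝ≥0∞) :
    t.inf (fun S => x + m S) = x + t.inf m := by
  rcases t.eq_empty_or_nonempty with rfl | ht
  · simp
  · refine le_antisymm ?_ (Finset.le_inf fun S hS => add_le_add_right (Finset.inf_le hS) x)
    obtain ⟨S₀, hS₀, hinf⟩ := Finset.exists_mem_eq_inf t ht m
    rw [hinf]
    exact Finset.inf_le (f := fun S => x + m S) hS₀ |>.trans (le_refl _)

lemma cstar_update_top (SS : Finset (Finset A)) (c : A → ℝ≥0∞) (a : A) :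
    cstar SS (Function.update c a ⊤) = Dmin SS c a := by
  rw [cstar_eq_inf, inf_split _ _ a, Dmin]
  have h1 : (SS.filter (fun S => a ∉ S)).inf (structCost (Function.update c a ⊤))
      = (SS.filter (fun S => a ∉ S)).inf (structCost c) :=
    Finset.inf_congr rfl fun S hS => structCost_update_not_mem (Finset.mem_filter.mp hS).2 _
  have h2 : (SS.filter (fun S => a ∈ S)).inf (structCost (Function.update c a ⊤)) = ⊤ :=
    le_antisymm le_top (Finset.le_inf fun S hS =>
      (structCost_update_top_of_mem (Finset.mem_filter.mp hS).2).ge)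
  rw [h1, h2, inf_top_eq]

lemma cstar_update_zero (SS : Finset (Finset A)) (c : A → ℝ≥0∞) (a : A) :
    cstar SS (Function.update c a 0) = Dmin SS c a ⊓ Mmin SS c a := by
  rw [cstar_eq_inf, inf_split _ _ a, Dmin, Mmin]
  congr 1
  exact Finset.inf_congr rfl fun S hS => structCost_update_not_mem (Finset.mem_filter.mp hS).2 _

lemma cstar_split (SS : Finset (Finset A)) (c : A → ℝ≥0∞) (a : A) :
    cstar SS c = Dmin SS c a ⊓ (c a + Mmin SS c a) := by
  rw [cstar_eq_inf, inf_split _ _ a]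
  congr 1
  rw [Mmin, ← finset_inf_const_add]
  exact Finset.inf_congr rfl fun S hS =>
    structCost_eq_add_update_zero (Finset.mem_filter.mp hS).2

lemma tsub_inf_self (x y : ℝ≥0∞) : x - (x ⊓ y) = x - y := by
  rcases le_total y x with h | h
  · rw [inf_eq_right.mpr h]
  · rw [inf_eq_left.mpr h, tsub_self, (tsub_eq_zero_iff_le).mpr h]

lemma vth_eq (SS : Finset (Finset A)) (c : A → ℝ≥0∞) (a : A) :
    vth SS c a = Dmin SS c a - Mmin SS c a := by
  rw [vth, cstar_update_top, cstar_update_zero, tsub_inf_self]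

lemma pay_eq (SS : Finset (Finset A)) (c : A → ℝ≥0∞) (a : A) :
    pay SS c a = vth SS c a - c a := by
  rw [pay, cstar_update_top, cstar_split SS c a, tsub_inf_self, vth_eq, add_comm,
    ← tsub_tsub]

lemma vth_update (SS : Finset (Finset A)) (c : A → ℝ≥0∞) (a : A) (t : ℝ≥0∞) :
    vth SS (Function.update c a t) a = vth SS c a := by
  rw [vth, vth, Function.update_idem, Function.update_idem]

lemma structCost_ne_top {c : A → ℝ≥0∞} (hfin : ∀ b, c b ≠ ⊤) (S : Finset A) :
    structCost c S ≠ ⊤ := by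
  rw [structCost]
  exact (ENNReal.sum_lt_top.mpr fun b _ => (hfin b).lt_top).ne

/-- The key tie-free decomposition: the minimum cost is the sum over elements whose
cost is strictly below their threshold. -/
lemma sum_ite_lt_vth_eq_cstar {SS : Finset (Finset A)} {c : A → ℝ≥0∞}
    (hne : SS.Nonempty) (hfin : ∀ b, c b ≠ ⊤)
    (hinj : ∀ S ∈ SS, ∀ T ∈ SS, structCost c S = structCost c T → S = T) :
    ∑ a, (if c a < vth SS c a then c a else 0) = cstar SS c := by
  obtain ⟨S₀, hS₀, hS₀inf⟩ := Finset.exists_mem_eq_inf SS hne (structCost c)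
  have hmin : structCost c S₀ = cstar SS c := by rw [cstar_eq_inf, hS₀inf]
  have hiff : ∀ a : A, c a < vth SS c a ↔ a ∈ S₀ := by
    intro a
    rw [vth_eq]
    constructor
    · intro hlt
      by_contra ha
      -- a ∉ S₀ : then Dmin = cstar ≤ c a + Mmin, contradicting c a < Dmin - Mmin
      have hD : Dmin SS c a ≤ cstar SS c := by
        rw [← hmin, Dmin]
        exact Finset.inf_le (Finset.mem_filter.mpr ⟨hS₀, ha⟩)
      have hle : Dmin SS c a ≤ c a + Mmin SS c a :=
        hD.trans (by rw [cstar_split SS c a]; exact inf_le_right)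
      have : Dmin SS c a - Mmin SS c a ≤ c a := tsub_le_iff_right.mpr hle
      exact absurd hlt (not_lt.mpr this)
    · intro ha
      rw [lt_tsub_iff_right]
      -- c a + Mmin ≤ cstar < Dmin
      have h1 : c a + Mmin SS c a ≤ cstar SS c := by
        rw [← hmin, structCost_eq_add_update_zero ha]
        exact add_le_add_right (Finset.inf_le (Finset.mem_filter.mpr ⟨hS₀, ha⟩)) _
      have h2 : cstar SS c < Dmin SS c a := by
        rcases (SS.filter (fun S => a ∉ S)).eq_empty_or_nonempty with he | hne'
        · rw [Dmin, he, Finset.inf_empty]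
          rw [← hmin]; exact (structCost_ne_top hfin S₀).lt_top
        · obtain ⟨T, hT, hTinf⟩ := Finset.exists_mem_eq_inf _ hne' (structCost c)
          rw [Dmin, hTinf]
          rcases Finset.mem_filter.mp hT with ⟨hTSS, hAT⟩
          have hTne : T ≠ S₀ := fun h => hAT (h ▸ ha)
          have hge : cstar SS c ≤ structCost c T := by
            rw [cstar_eq_inf]; exact Finset.inf_le hTSS
          rcases hge.lt_or_eq with h | h
          · exact h
          · exact absurd (hinj T hTSS S₀ hS₀ (by rw [← h, hmin])) hTne
      exact h1.trans_lt h2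
  calc ∑ a, (if c a < vth SS c a then c a else 0)
      = ∑ a, (if a ∈ S₀ then c a else 0) := by
        refine Finset.sum_congr rfl fun a _ => by rw [if_congr (hiff a) rfl rfl]
    _ = structCost c S₀ := by
        rw [structCost, Finset.sum_ite_mem, Finset.univ_inter]
    _ = cstar SS c := hmin

namespace RankMatroid

lemma rk_insert_le (M : RankMatroid A) (S : Finset A) (b : A) :
    M.rk (insert b S) ≤ M.rk S + 1 := by
  have h := M.rk_submodular S {b}
  have h2 : M.rk {b} ≤ 1 := M.rk_le_card {b}
  have h3 : S ∪ {b} = insert b S := by rw [Finset.union_comm]; rfl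
  rw [h3] at h
  omega

lemma rk_union_le_card (M : RankMatroid A) (S T : Finset A) :
    M.rk (S ∪ T) ≤ M.rk S + T.card := by
  induction T using Finset.induction_on with
  | empty => simp
  | @insert b T hb ih =>
      have h1 : S ∪ insert b T = insert b (S ∪ T) := by
        ext x; simp [or_comm, or_assoc, or_left_comm]
      rw [h1, Finset.card_insert_of_notMem hb]
      calc M.rk (insert b (S ∪ T)) ≤ M.rk (S ∪ T) + 1 := M.rk_insert_le _ _
        _ ≤ M.rk S + T.card + 1 := by omega
      
lemma indep_subset {M : RankMatroid A} {S T : Finset A} (hT : M.Indep T) (hST : S ⊆ T) :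
    M.Indep S := by
  have h1 : M.rk T ≤ M.rk S + (T \ S).card := by
    have := M.rk_union_le_card S (T \ S)
    rwa [Finset.union_sdiff_of_subset hST] at this
  have h2 : (T \ S).card = T.card - S.card := Finset.card_sdiff_of_subset hST
  have h3 : S.card ≤ T.card := Finset.card_le_card hST
  have h4 : M.rk S ≤ S.card := M.rk_le_card S
  have h5 : M.rk T = T.card := hT
  exact Nat.le_antisymm h4 (by omega)

lemma augment {M : RankMatroid A} {S U : Finset A} (hS : M.Indep S) (hSU : S ⊆ U)
    (hlt : S.card < M.rk U) : ∃ b ∈ U, b ∉ S ∧ M.Indep (insert b S) := by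
  by_contra hcon
  push_neg at hcon
  have key : ∀ V : Finset A, V ⊆ U \ S → M.rk (S ∪ V) = M.rk S := by
    intro V
    induction V using Finset.induction_on with
    | empty => intro _; simp
    | @insert b V hbV' ih =>
        intro hV
        have hbUS : b ∈ U \ S := hV (Finset.mem_insert_self b V)
        have hVU : V ⊆ U \ S := (Finset.subset_insert b V).trans hV
        rcases Finset.mem_sdiff.mp hbUS with ⟨hbU, hbS⟩
        have hbind : ¬ M.Indep (insert b S) := hcon b hbU hbS
        have hrkb : M.rk (insert b S) = M.rk S := by
          have h1 : M.rk (insert b S) ≤ M.rk S + 1 := M.rk_insert_le S b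
          have h2 : M.rk S ≤ M.rk (insert b S) := M.rk_mono (Finset.subset_insert b S)
          have h3 : M.rk (insert b S) ≠ (insert b S).card := hbind
          rw [Finset.card_insert_of_notMem hbS] at h3
          have h4 : M.rk (insert b S) ≤ (insert b S).card := M.rk_le_card _
          rw [Finset.card_insert_of_notMem hbS] at h4
          have h5 : M.rk S = S.card := hS
          omega
        -- submodularity on (S ∪ V) and (insert b S)
        have hsub := M.rk_submodular (S ∪ V) (insert b S)
        have hbV : b ∉ V := hbV'
        have hcap : (S ∪ V) ∩ insert b S = S := by
          ext x
          simp only [Finset.mem_inter, Finset.mem_union, Finset.mem_insert]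
          constructor
          · rintro ⟨hx1, hx2⟩
            rcases hx2 with rfl | hx2
            · rcases hx1 with h | h
              · exact h
              · exact absurd h hbV
            · exact hx2
          · intro hx; exact ⟨Or.inl hx, Or.inr hx⟩
        have hcup : (S ∪ V) ∪ insert b S = S ∪ insert b V := by
          ext x
          simp only [Finset.mem_union, Finset.mem_insert]
          tauto
        rw [hcap, hcup, ih hVU, hrkb] at hsub
        have h6 : M.rk (S ∪ V) ≤ M.rk (S ∪ insert b V) := M.rk_mono (by
          intro x hx
          rcases Finset.mem_union.mp hx with h | h
          · exact Finset.mem_union_left _ h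
          · exact Finset.mem_union_right _ (Finset.mem_insert_of_mem h))
        rw [ih hVU] at h6
        omega
  have hUeq : S ∪ (U \ S) = U := Finset.union_sdiff_of_subset hSU
  have := key (U \ S) (le_refl _)
  rw [hUeq] at this
  have : M.rk U = S.card := by rw [this]; exact hS
  omega

/-- Bridgeless implies every VCG threshold is at most 1 when costs are at most 1. -/
lemma vth_le_one (M : RankMatroid A) (hM : M.Bridgeless) (c : A → ℝ≥0∞)
    (hc : ∀ b, c b ≤ 1) (a : A) : vth M.bases c a ≤ 1 := by
  rw [vth, tsub_le_iff_right]
  rcases eq_or_ne (cstar M.bases (Function.update c a 0)) ⊤ with htop | hne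
  · rw [htop]; simp
  have hne' : M.bases.Nonempty := by
    by_contra h
    rw [Finset.not_nonempty_iff_eq_empty] at h
    rw [cstar_eq_inf, h, Finset.inf_empty] at hne
    exact hne rfl
  obtain ⟨S₀, hS₀, hS₀inf⟩ :=
    Finset.exists_mem_eq_inf M.bases hne' (structCost (Function.update c a 0))
  have hS₀min : structCost (Function.update c a 0) S₀ = cstar M.bases (Function.update c a 0) := by
    rw [cstar_eq_inf, hS₀inf]
  rcases Finset.mem_filter.mp hS₀ with ⟨-, hS₀indep, hS₀rk⟩
  -- find a basis T avoiding a with structCost c T ≤ 1 + structCost (update c a 0) S₀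
  suffices h : ∃ T ∈ M.bases, a ∉ T ∧
      structCost c T ≤ 1 + structCost (Function.update c a 0) S₀ by
    obtain ⟨T, hT, haT, hcost⟩ := h
    calc cstar M.bases (Function.update c a ⊤)
        ≤ structCost (Function.update c a ⊤) T := by
          rw [cstar_eq_inf]; exact Finset.inf_le hT
      _ = structCost c T := structCost_update_not_mem haT _
      _ ≤ 1 + structCost (Function.update c a 0) S₀ := hcost
      _ = 1 + cstar M.bases (Function.update c a 0) := by rw [hS₀min]
  by_cases ha : a ∈ S₀
  · -- exchange
    have hS'idp : M.Indep (S₀.erase a) := indep_subset hS₀indep (Finset.erase_subset a S₀)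
    have hcard : (S₀.erase a).card = S₀.card - 1 := Finset.card_erase_of_mem ha
    have hcardpos : 1 ≤ S₀.card := Finset.card_pos.mpr ⟨a, ha⟩
    have hlt : (S₀.erase a).card < M.rk (Finset.univ.erase a) := by
      rw [hM a, hcard, ← hS₀rk, hS₀indep]
      omega
    have hsub : S₀.erase a ⊆ Finset.univ.erase a := by
      intro x hx
      exact Finset.mem_erase.mpr ⟨(Finset.mem_erase.mp hx).1, Finset.mem_univ x⟩
    obtain ⟨b, hbU, hbS', hbidp⟩ := augment hS'idp hsub hlt
    have hba : b ≠ a := (Finset.mem_erase.mp hbU).1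
    refine ⟨insert b (S₀.erase a), ?_, ?_, ?_⟩
    · apply Finset.mem_filter.mpr
      refine ⟨Finset.mem_univ _, hbidp, ?_⟩
      rw [hbidp, Finset.card_insert_of_notMem hbS', hcard, ← hS₀rk, hS₀indep]
      omega
    · intro h
      rcases Finset.mem_insert.mp h with h | h
      · exact hba h.symm
      · exact (Finset.mem_erase.mp h).1 rfl
    · have hsum : structCost c (insert b (S₀.erase a))
          = c b + ∑ x ∈ S₀.erase a, c x := by
        rw [structCost, Finset.sum_insert hbS']
      have hS0sum : structCost (Function.update c a 0) S₀ = ∑ x ∈ S₀.erase a, c x := by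
        rw [structCost, ← Finset.add_sum_erase _ _ ha, Function.update_self, zero_add]
        exact Finset.sum_congr rfl fun x hx =>
          Function.update_of_ne (Finset.ne_of_mem_erase hx) _ _
      rw [hsum, hS0sum]
      exact add_le_add_left (hc b) _
  · refine ⟨S₀, hS₀, ha, ?_⟩
    rw [structCost_update_not_mem ha]
    exact le_add_self

end RankMatroid

end AuxDet

section AuxProb

noncomputable abbrev unif : Measure ℝ := volume.restrict (Set.Ioo (0:ℝ) 1)

instance : IsProbabilityMeasure (unif) := by
  constructor
  rw [Measure.restrict_apply_univ, Real.volume_Ioo]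
  norm_num

lemma kernel_eq {v : ℝ≥0∞} (hv : v ≤ 1) :
    ∫⁻ t, (v - ENNReal.ofReal t) ∂unif
      = ∫⁻ t, (if ENNReal.ofReal t < v then ENNReal.ofReal t else 0) ∂unif := by
  rcases eq_or_ne v 0 with rfl | hv0
  · simp [zero_tsub]
  have hvtop : v ≠ ⊤ := (hv.trans_lt (by norm_num)).ne
  set r : ℝ := v.toReal with hr
  have hvr : v = ENNReal.ofReal r := (ENNReal.ofReal_toReal hvtop).symm
  have hr0 : 0 < r := ENNReal.toReal_pos hv0 hvtop
  have hr1 : r ≤ 1 := by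
    have := ENNReal.toReal_mono (by norm_num) hv
    simpa using this
  have hsplit : Set.Ioo (0:ℝ) 1 = Set.Ioo 0 r ∪ Set.Ico r 1 :=
    (Set.Ioo_union_Ico_eq_Ioo hr0 hr1).symm
  have hdisj : Disjoint (Set.Ioo (0:ℝ) r) (Set.Ico r 1) := by
    refine Set.disjoint_left.mpr fun t ht ht' => ?_
    exact absurd ht.2 (not_lt.mpr ht'.1)
  have hmC : MeasurableSet (Set.Ico r (1:ℝ)) := measurableSet_Ico
  show (∫⁻ t in Set.Ioo (0:ℝ) 1, (v - ENNReal.ofReal t) ∂volume)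
      = ∫⁻ t in Set.Ioo (0:ℝ) 1, (if ENNReal.ofReal t < v then ENNReal.ofReal t else 0) ∂volume
  rw [hsplit, lintegral_union hmC hdisj, lintegral_union hmC hdisj]
  have hz1 : (∫⁻ t in Set.Ico r 1, (v - ENNReal.ofReal t) ∂volume) = 0 := by
    have h0 : ∀ t ∈ Set.Ico r (1:ℝ), v - ENNReal.ofReal t = (0:ℝ≥0∞) := by
      intro t ht
      rw [hvr, tsub_eq_zero_iff_le]
      exact ENNReal.ofReal_le_ofReal ht.1
    calc (∫⁻ t in Set.Ico r 1, (v - ENNReal.ofReal t) ∂volume)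
        = ∫⁻ _t in Set.Ico r 1, (0:ℝ≥0∞) ∂volume :=
          setLIntegral_congr_fun hmC h0
      _ = 0 := lintegral_zero
  have hz2 : (∫⁻ t in Set.Ico r 1,
      (if ENNReal.ofReal t < v then ENNReal.ofReal t else 0) ∂volume) = 0 := by
    have h0 : ∀ t ∈ Set.Ico r (1:ℝ),
        (if ENNReal.ofReal t < v then ENNReal.ofReal t else 0) = (0:ℝ≥0∞) := by
      intro t ht
      rw [if_neg]
      rw [hvr]
      exact not_lt.mpr (ENNReal.ofReal_le_ofReal ht.1)
    calc (∫⁻ t in Set.Ico r 1,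
        (if ENNReal.ofReal t < v then ENNReal.ofReal t else 0) ∂volume)
        = ∫⁻ _t in Set.Ico r 1, (0:ℝ≥0∞) ∂volume :=
          setLIntegral_congr_fun hmC h0
      _ = 0 := lintegral_zero
  rw [hz1, hz2, add_zero, add_zero]
  have hL : (∫⁻ t in Set.Ioo (0:ℝ) r, (v - ENNReal.ofReal t) ∂volume)
      = ∫⁻ t in Set.Ioo (0:ℝ) r, ENNReal.ofReal (r - t) ∂volume := by
    refine setLIntegral_congr_fun measurableSet_Ioo (fun t ht => ?_)
    rw [hvr, ENNReal.ofReal_sub _ ht.1.le]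
  have hR : (∫⁻ t in Set.Ioo (0:ℝ) r,
      (if ENNReal.ofReal t < v then ENNReal.ofReal t else 0) ∂volume)
      = ∫⁻ t in Set.Ioo (0:ℝ) r, ENNReal.ofReal t ∂volume := by
    refine setLIntegral_congr_fun measurableSet_Ioo (fun t ht => ?_)
    rw [if_pos]
    rw [hvr]
    exact (ENNReal.ofReal_lt_ofReal_iff hr0).mpr ht.2
  rw [hL, hR]
  have hpre : (fun t : ℝ => r - t) ⁻¹' (Set.Ioo 0 r) = Set.Ioo 0 r := by
    ext t
    simp only [Set.mem_preimage, Set.mem_Ioo, sub_pos, sub_lt_self_iff]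
    constructor <;> intro h <;> exact ⟨h.2, h.1⟩
  have hmp : MeasurePreserving (fun t : ℝ => r - t) volume volume := by
    have := (measurePreserving_add_left (volume : Measure ℝ) r).comp
      (Measure.measurePreserving_neg (volume : Measure ℝ))
    simpa [Function.comp_def, sub_eq_add_neg] using this
  have := hmp.setLIntegral_comp_preimage
    (s := Set.Ioo 0 r) measurableSet_Ioo (f := fun t => ENNReal.ofReal t)
    ENNReal.measurable_ofReal
  rw [hpre] at this
  exact this

lemma joint_law {Ω : Type*} [MeasurableSpace Ω] (μ : Measure Ω) [IsProbabilityMeasure μ]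
    (X : A → Ω → ℝ) (hX : ∀ a, Measurable (X a))
    (hindep : iIndepFun X μ)
    (hdist : ∀ a, μ.map (X a) = volume.restrict (Set.Ioo (0:ℝ) 1)) :
    μ.map (fun ω a => X a ω) = Measure.pi (fun _ : A => unif) := by
  refine (Measure.pi_eq fun s hs => ?_).symm
  rw [Measure.map_apply (measurable_pi_lambda _ hX) (MeasurableSet.univ_pi hs)]
  have hpre : (fun ω a => X a ω) ⁻¹' (Set.pi Set.univ s) = ⋂ a ∈ Finset.univ, X a ⁻¹' s a := by
    ext ω; simp [Set.mem_pi]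
  rw [hpre, hindep.measure_inter_preimage_eq_mul Finset.univ (fun a _ => hs a)]
  refine Finset.prod_congr rfl fun a _ => ?_
  rw [← Measure.map_apply (hX a) (hs a), hdist a]

lemma lintegral_eq_pi {Ω : Type*} [MeasurableSpace Ω] (μ : Measure Ω) [IsProbabilityMeasure μ]
    (X : A → Ω → ℝ) (hX : ∀ a, Measurable (X a))
    (hindep : iIndepFun X μ)
    (hdist : ∀ a, μ.map (X a) = volume.restrict (Set.Ioo (0:ℝ) 1))
    {F : (A → ℝ) → ℝ≥0∞} (hF : Measurable F) :
    ∫⁻ ω, F (fun a => X a ω) ∂μ = ∫⁻ x, F x ∂(Measure.pi (fun _ : A => unif)) := by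
  rw [← joint_law μ X hX hindep hdist, lintegral_map hF (measurable_pi_lambda _ hX)]


/-! ### Measurability -/

lemma measurable_structCostF (S : Finset A) :
    Measurable (fun c : A → ℝ≥0∞ => structCost c S) :=
  Finset.measurable_sum S (fun a _ => measurable_pi_apply a)

lemma measurable_updateFun (a : A) (v : ℝ≥0∞) :
    Measurable (fun c : A → ℝ≥0∞ => Function.update c a v) := by
  refine measurable_pi_lambda _ (fun b => ?_)
  by_cases h : b = a
  · simpa [Function.update_apply, h] using measurable_const
  · simpa [Function.update_apply, h] using measurable_pi_apply b

lemma measurable_cstarF (SS : Finset (Finset A)) :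
    Measurable (fun c : A → ℝ≥0∞ => cstar SS c) := by
  unfold cstar
  exact Measurable.iInf fun S => Measurable.iInf fun _ => measurable_structCostF S

lemma measurable_vthF (SS : Finset (Finset A)) (a : A) :
    Measurable (fun c : A → ℝ≥0∞ => vth SS c a) := by
  unfold vth
  exact ((measurable_cstarF SS).comp (measurable_updateFun a ⊤)).sub
    ((measurable_cstarF SS).comp (measurable_updateFun a 0))

lemma measurable_payF (SS : Finset (Finset A)) (a : A) :
    Measurable (fun c : A → ℝ≥0∞ => pay SS c a) := by
  unfold pay
  exact ((measurable_cstarF SS).comp (measurable_updateFun a ⊤)).sub (measurable_cstarF SS)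

lemma measurable_cvcgF (SS : Finset (Finset A)) :
    Measurable (fun c : A → ℝ≥0∞ => cvcg SS c) := by
  unfold cvcg
  exact (measurable_cstarF SS).add
    (Finset.measurable_sum Finset.univ (fun a _ => measurable_payF SS a))

/-- The coordinatewise `ofReal` map. -/
noncomputable def Cof : (A → ℝ) → A → ℝ≥0∞ := fun x b => ENNReal.ofReal (x b)

lemma measurable_Cof : Measurable (Cof : (A → ℝ) → A → ℝ≥0∞) :=
  measurable_pi_lambda _ fun b => ENNReal.measurable_ofReal.comp (measurable_pi_apply b)

lemma Cof_update (x : A → ℝ) (a : A) (t : ℝ) :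
    Cof (Function.update x a t) = Function.update (Cof x) a (ENNReal.ofReal t) := by
  funext b
  by_cases h : b = a
  · subst h; simp [Cof]
  · simp [Cof, Function.update_of_ne h]

/-! ### Marginal helpers -/

lemma lintegral_pi_eq_of_fiber_eq {f g : (A → ℝ) → ℝ≥0∞}
    (hf : Measurable f) (hg : Measurable g) (a : A)
    (h : ∀ x : A → ℝ,
      ∫⁻ t, f (Function.update x a t) ∂unif = ∫⁻ t, g (Function.update x a t) ∂unif) :
    ∫⁻ x, f x ∂(Measure.pi fun _ : A => unif)
      = ∫⁻ x, g x ∂(Measure.pi fun _ : A => unif) := by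
  rw [lintegral_eq_lmarginal_univ (fun _ => (0:ℝ)),
    lintegral_eq_lmarginal_univ (fun _ => (0:ℝ)),
    lmarginal_erase' _ hf (Finset.mem_univ a),
    lmarginal_erase' _ hg (Finset.mem_univ a)]
  congr 1
  funext x
  exact h x

lemma pi_null_of_fiber_null {E : Set (A → ℝ)} (hE : MeasurableSet E) (a : A)
    (h : ∀ x : A → ℝ, unif {t | Function.update x a t ∈ E} = 0) :
    Measure.pi (fun _ : A => unif) E = 0 := by
  rw [← lintegral_indicator_one hE]
  have h0 : ∫⁻ x, (0:ℝ≥0∞) ∂(Measure.pi fun _ : A => unif) = 0 := lintegral_zero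
  rw [← h0]
  refine lintegral_pi_eq_of_fiber_eq ((measurable_one).indicator hE) measurable_const a ?_
  intro x
  have heq : ∀ t : ℝ, E.indicator (1 : (A → ℝ) → ℝ≥0∞) (Function.update x a t)
      = {t : ℝ | Function.update x a t ∈ E}.indicator (1 : ℝ → ℝ≥0∞) t := by
    intro t
    by_cases ht : Function.update x a t ∈ E
    · rw [Set.indicator_of_mem ht,
        Set.indicator_of_mem (show t ∈ {t : ℝ | Function.update x a t ∈ E} from ht)]
      rfl
    · rw [Set.indicator_of_notMem ht,
        Set.indicator_of_notMem (show t ∉ {t : ℝ | Function.update x a t ∈ E} from ht)]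
  simp_rw [heq]
  have hEt : MeasurableSet {t : ℝ | Function.update x a t ∈ E} :=
    (measurable_update x) hE
  rw [lintegral_indicator_one hEt, h x, lintegral_zero]

lemma unif_notIoo : unif ((Set.Ioo (0:ℝ) 1)ᶜ) = 0 := by
  rw [Measure.restrict_apply (measurableSet_Ioo.compl)]
  simp

lemma ae_coords_Ioo :
    ∀ᵐ x ∂(Measure.pi fun _ : A => unif), ∀ b : A, x b ∈ Set.Ioo (0:ℝ) 1 := by
  rw [ae_all_iff]
  intro b
  rw [ae_iff]
  have hE : MeasurableSet {x : A → ℝ | ¬ x b ∈ Set.Ioo (0:ℝ) 1} :=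
    ((measurable_pi_apply b) measurableSet_Ioo).compl
  refine pi_null_of_fiber_null hE b ?_
  intro x
  have : {t : ℝ | Function.update x b t ∈ {x : A → ℝ | ¬ x b ∈ Set.Ioo (0:ℝ) 1}}
      = (Set.Ioo (0:ℝ) 1)ᶜ := by
    ext t; simp [Function.update_self]
  rw [this, unif_notIoo]

/-- Almost surely, distinct structures have distinct costs. -/
lemma ae_costs_inj (SS : Finset (Finset A)) :
    ∀ᵐ x ∂(Measure.pi fun _ : A => unif),
      ∀ S T : Finset A, ¬ S ⊆ T → structCost (Cof x) S ≠ structCost (Cof x) T := by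
  rw [ae_all_iff]
  intro S
  rw [ae_all_iff]
  intro T
  by_cases hST : S ⊆ T
  · exact Filter.Eventually.of_forall fun x h => absurd hST h
  · obtain ⟨a, haS, haT⟩ := Finset.not_subset.mp hST
    have hnull : Measure.pi (fun _ : A => unif)
        {x : A → ℝ | structCost (Cof x) S = structCost (Cof x) T} = 0 := by
      have hmS : Measurable (fun x : A → ℝ => structCost (Cof x) S) :=
        (measurable_structCostF S).comp measurable_Cof
      have hmT : Measurable (fun x : A → ℝ => structCost (Cof x) T) :=
        (measurable_structCostF T).comp measurable_Cof
      refine pi_null_of_fiber_null (measurableSet_eq_fun hmS hmT) a ?_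
      intro x
      set K₁ : ℝ≥0∞ := ∑ b ∈ S.erase a, ENNReal.ofReal (x b) with hK₁
      set K₂ : ℝ≥0∞ := ∑ b ∈ T, ENNReal.ofReal (x b) with hK₂
      have hK₁fin : K₁ ≠ ⊤ := by
        rw [hK₁]
        exact (ENNReal.sum_lt_top.mpr fun b _ => ENNReal.ofReal_lt_top).ne
      have hset : {t : ℝ | Function.update x a t ∈
            {x : A → ℝ | structCost (Cof x) S = structCost (Cof x) T}}
          ⊆ (Set.Iic (0:ℝ)) ∪ {(K₂ - K₁).toReal} := by
        intro t ht
        simp only [Set.mem_setOf_eq] at ht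
        have hS : structCost (Cof (Function.update x a t)) S = ENNReal.ofReal t + K₁ := by
          rw [structCost, ← Finset.add_sum_erase _ _ haS]
          congr 1
          · simp [Cof, Function.update_self]
          · refine Finset.sum_congr rfl fun b hb => ?_
            simp [Cof, Function.update_of_ne (Finset.ne_of_mem_erase hb)]
        have hT : structCost (Cof (Function.update x a t)) T = K₂ := by
          refine Finset.sum_congr rfl fun b hb => ?_
          have : b ≠ a := fun h => haT (h ▸ hb)
          simp [Cof, Function.update_of_ne this]
        rw [hS, hT] at ht
        rcases le_or_gt t 0 with h0 | h0
        · exact Or.inl h0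
        · right
          have : ENNReal.ofReal t = K₂ - K₁ := ENNReal.eq_sub_of_add_eq hK₁fin ht
          rw [Set.mem_singleton_iff, ← ENNReal.toReal_ofReal h0.le, this]
      refine measure_mono_null hset ?_
      refine le_antisymm (le_trans (measure_union_le _ _) ?_) zero_le
      have h1 : unif (Set.Iic (0:ℝ)) = 0 := by
        rw [Measure.restrict_apply measurableSet_Iic]
        have he : Set.Iic (0:ℝ) ∩ Set.Ioo 0 1 = ∅ := by
          ext t
          simp only [Set.mem_inter_iff, Set.mem_Iic, Set.mem_Ioo, Set.mem_empty_iff_false,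
            iff_false, not_and]
          intro h1 h2
          linarith
        rw [he, measure_empty]
      have h2 : unif ({(K₂ - K₁).toReal} : Set ℝ) = 0 := by
        rw [Measure.restrict_apply (measurableSet_singleton _)]
        exact measure_mono_null Set.inter_subset_left Real.volume_singleton
      rw [h1, h2, add_zero]
    have := measure_eq_zero_iff_ae_notMem.mp hnull
    filter_upwards [this] with x hx _
    exact hx

end AuxProb


/-- For a bridgeless matroid with i.i.d. `U(0,1)` costs, the VCG threshold
of any element is at most `1` (for any costs bounded by `1`), and consequently
`E[C_VCG] = 2 E[C*]`. -/
theorem bridgeless_matroid_expected_vcg_eq_two_nominal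
    {Ω : Type*} [MeasurableSpace Ω] (μ : Measure Ω) [IsProbabilityMeasure μ]
    (M : RankMatroid A) (hM : M.Bridgeless)
    (X : A → Ω → ℝ) (hX : ∀ a, Measurable (X a))
    (hindep : iIndepFun X μ)
    (hdist : ∀ a, μ.map (X a) = volume.restrict (Set.Ioo (0:ℝ) 1)) :
    (∀ c : A → ℝ≥0∞, (∀ a, c a ≤ 1) → ∀ a : A, vth M.bases c a ≤ 1) ∧
    ∫⁻ ω, cvcg M.bases (fun a => ENNReal.ofReal (X a ω)) ∂μ
      = 2 * ∫⁻ ω, cstar M.bases (fun a => ENNReal.ofReal (X a ω)) ∂μ := by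
  classical
  refine ⟨fun c hc a => RankMatroid.vth_le_one M hM c hc a, ?_⟩
  have hcv : Measurable (fun x : A → ℝ => cvcg M.bases (Cof x)) :=
    (measurable_cvcgF M.bases).comp measurable_Cof
  have hcs : Measurable (fun x : A → ℝ => cstar M.bases (Cof x)) :=
    (measurable_cstarF M.bases).comp measurable_Cof
  have hL : ∫⁻ ω, cvcg M.bases (fun a => ENNReal.ofReal (X a ω)) ∂μ
      = ∫⁻ x, cvcg M.bases (Cof x) ∂(Measure.pi fun _ : A => unif) := by
    exact lintegral_eq_pi μ X hX hindep hdist (F := fun x => cvcg M.bases (Cof x)) hcv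
  have hR : ∫⁻ ω, cstar M.bases (fun a => ENNReal.ofReal (X a ω)) ∂μ
      = ∫⁻ x, cstar M.bases (Cof x) ∂(Measure.pi fun _ : A => unif) := by
    exact lintegral_eq_pi μ X hX hindep hdist (F := fun x => cstar M.bases (Cof x)) hcs
  rw [hL, hR]
  set π : Measure (A → ℝ) := Measure.pi (fun _ : A => unif) with hπdef
  set SS : Finset (Finset A) := M.bases with hSSdef
  rcases SS.eq_empty_or_nonempty with hemp | hne
  · have h1 : ∀ c : A → ℝ≥0∞, cstar SS c = ⊤ := fun c => by
      rw [cstar_eq_inf, hemp, Finset.inf_empty]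
    have h2 : ∀ x : A → ℝ, cvcg SS (Cof x) = ⊤ := fun x => by
      rw [cvcg, h1]; exact top_add _
    rw [lintegral_congr (fun x => h2 x), lintegral_congr (fun x => h1 (Cof x)),
      lintegral_const]
    simp
  -- main case
  have hsplit : ∫⁻ x, cvcg SS (Cof x) ∂π
      = (∫⁻ x, cstar SS (Cof x) ∂π) + ∑ a, ∫⁻ x, pay SS (Cof x) a ∂π := by
    have hfun : (fun x : A → ℝ => cvcg SS (Cof x))
        = fun x => cstar SS (Cof x) + ∑ a, pay SS (Cof x) a := rfl
    rw [hfun, lintegral_add_left hcs,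
      lintegral_finset_sum (f := fun (a : A) (x : A → ℝ) => pay SS (Cof x) a) _
      (fun a _ => (measurable_payF SS a).comp measurable_Cof)]
  have hmeasg : ∀ a : A, Measurable
      (fun x : A → ℝ => if Cof x a < vth SS (Cof x) a then Cof x a else 0) := by
    intro a
    have h1 : Measurable (fun x : A → ℝ => Cof x a) :=
      ENNReal.measurable_ofReal.comp (measurable_pi_apply a)
    have h2 : Measurable (fun x : A → ℝ => vth SS (Cof x) a) :=
      (measurable_vthF SS a).comp measurable_Cof
    exact Measurable.ite (measurableSet_lt h1 h2) h1 measurable_const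
  have hstepA : ∀ a : A, ∫⁻ x, pay SS (Cof x) a ∂π
      = ∫⁻ x, (if Cof x a < vth SS (Cof x) a then Cof x a else 0) ∂π := by
    intro a
    set G : Set (A → ℝ) := {x | ∀ b : A, x b ∈ Set.Ioo (0:ℝ) 1} with hG
    have hGm : MeasurableSet G := by
      have : G = ⋂ b, (fun x : A → ℝ => x b) ⁻¹' (Set.Ioo 0 1) := by
        ext x; simp [hG]
      rw [this]
      exact MeasurableSet.iInter fun b => (measurable_pi_apply b) measurableSet_Ioo
    have hmp : Measurable (fun x : A → ℝ => pay SS (Cof x) a) :=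
      (measurable_payF SS a).comp measurable_Cof
    have hae1 : (fun x : A → ℝ => pay SS (Cof x) a)
        =ᵐ[π] G.indicator (fun x => pay SS (Cof x) a) := by
      filter_upwards [ae_coords_Ioo (A := A)] with x hx
      rw [Set.indicator_of_mem (show x ∈ G from hx)]
    have hae2 : (fun x : A → ℝ => if Cof x a < vth SS (Cof x) a then Cof x a else 0)
        =ᵐ[π] G.indicator (fun x => if Cof x a < vth SS (Cof x) a then Cof x a else 0) := by
      filter_upwards [ae_coords_Ioo (A := A)] with x hx
      rw [Set.indicator_of_mem (show x ∈ G from hx)]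
    rw [lintegral_congr_ae hae1, lintegral_congr_ae hae2]
    refine lintegral_pi_eq_of_fiber_eq (hmp.indicator hGm) ((hmeasg a).indicator hGm) a ?_
    intro x
    by_cases hx : ∀ b : A, b ≠ a → x b ∈ Set.Ioo (0:ℝ) 1
    · set V := vth SS (Cof x) a with hV
      have hVle : V ≤ 1 := by
        have h1 : V = vth SS (Function.update (Cof x) a 0) a := (vth_update SS (Cof x) a 0).symm
        rw [h1, hSSdef]
        refine RankMatroid.vth_le_one M hM _ (fun b => ?_) a
        by_cases hb : b = a
        · subst hb; rw [Function.update_self]; exact zero_le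
        · rw [Function.update_of_ne hb]
          exact ENNReal.ofReal_le_one.mpr (hx b hb).2.le
      have hmem : ∀ t : ℝ, (Function.update x a t ∈ G ↔ t ∈ Set.Ioo (0:ℝ) 1) := by
        intro t
        constructor
        · intro h
          have := h a
          rwa [Function.update_self] at this
        · intro ht b
          by_cases hb : b = a
          · subst hb; rwa [Function.update_self]
          · rw [Function.update_of_ne hb]; exact hx b hb
      have haet : ∀ᵐ t ∂unif, t ∈ Set.Ioo (0:ℝ) 1 := ae_restrict_mem measurableSet_Ioo
      have hLL : ∫⁻ t, G.indicator (fun x => pay SS (Cof x) a) (Function.update x a t) ∂unif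
          = ∫⁻ t, (V - ENNReal.ofReal t) ∂unif := by
        refine lintegral_congr_ae ?_
        filter_upwards [haet] with t ht
        rw [Set.indicator_of_mem ((hmem t).mpr ht), Cof_update, pay_eq, vth_update,
          Function.update_self]
      have hRR : ∫⁻ t, G.indicator
            (fun x => if Cof x a < vth SS (Cof x) a then Cof x a else 0)
            (Function.update x a t) ∂unif
          = ∫⁻ t, (if ENNReal.ofReal t < V then ENNReal.ofReal t else 0) ∂unif := by
        refine lintegral_congr_ae ?_
        filter_upwards [haet] with t ht
        rw [Set.indicator_of_mem ((hmem t).mpr ht), Cof_update, vth_update,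
          Function.update_self]
      rw [hLL, hRR]
      exact kernel_eq hVle
    · push_neg at hx
      obtain ⟨b, hba, hb⟩ := hx
      have hnot : ∀ t : ℝ, Function.update x a t ∉ G := by
        intro t h
        exact hb (by have := h b; rwa [Function.update_of_ne hba] at this)
      rw [lintegral_congr (fun t => Set.indicator_of_notMem (hnot t) _),
        lintegral_congr (fun t => Set.indicator_of_notMem (hnot t) _)]
  have hstepB : ∫⁻ x, (∑ a, if Cof x a < vth SS (Cof x) a then Cof x a else 0) ∂π
      = ∫⁻ x, cstar SS (Cof x) ∂π := by
    refine lintegral_congr_ae ?_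
    filter_upwards [ae_costs_inj (A := A) SS] with x hx
    refine sum_ite_lt_vth_eq_cstar hne (fun b => ENNReal.ofReal_ne_top) ?_
    intro S hS T hT hcost
    by_contra hne'
    rcases Finset.mem_filter.mp hS with ⟨-, hSi, hSr⟩
    rcases Finset.mem_filter.mp hT with ⟨-, hTi, hTr⟩
    have hcard : S.card = T.card := by
      rw [← hSi, hSr, ← hTr, hTi]
    have hnsub : ¬ S ⊆ T := fun hsub =>
      hne' (Finset.eq_of_subset_of_card_le hsub (le_of_eq hcard.symm))
    exact hx S T hnsub hcost
  have hsum : ∑ a, ∫⁻ x, pay SS (Cof x) a ∂π = ∫⁻ x, cstar SS (Cof x) ∂π := by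
    rw [Finset.sum_congr rfl (fun a _ => hstepA a),
      ← lintegral_finset_sum _ (fun a _ => hmeasg a)]
    exact hstepB
  rw [hsplit, hsum, two_mul]
end

section
/- For a matroid M on ground set A with arbitrary nonnegative costs, the total VCG cost satisfies C_VCG(M) = C*(M) + ∫_0^∞ β(A(t)) dt, where β(S) = |{a ∈ S : rk(S∖{a}) < rk(S)}| is the number of bridges in S. -/
open MeasureTheory ProbabilityTheory ENNReal
open scoped BigOperators

variable {A : Type*} [Fintype A] [DecidableEq A]

namespace VCGAux

variable {A : Type*} [Fintype A] [DecidableEq A]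

lemma rk_empty (M : RankMatroid A) : M.rk ∅ = 0 :=
  Nat.le_zero.mp (le_trans (M.rk_le_card ∅) (by simp))

lemma rk_insert_le (M : RankMatroid A) (a : A) (S : Finset A) :
    M.rk (insert a S) ≤ M.rk S + 1 := by
  have h := M.rk_submodular S {a}
  have h1 : S ∪ {a} = insert a S := by ext x; simp [or_comm]
  have h2 : M.rk {a} ≤ 1 := le_trans (M.rk_le_card _) (by simp)
  rw [h1] at h
  omega

lemma rk_union_le_card (M : RankMatroid A) (S T : Finset A) :
    M.rk (S ∪ T) ≤ M.rk S + T.card := by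
  induction T using Finset.induction with
  | empty => simp
  | @insert a T ha IH =>
    have h1 : S ∪ insert a T = insert a (S ∪ T) := by ext x; simp; try tauto
    have h2 := rk_insert_le M a (S ∪ T)
    rw [h1, Finset.card_insert_of_notMem ha]
    omega

lemma indep_subset (M : RankMatroid A) {S T : Finset A} (hS : M.rk S = S.card)
    (hTS : T ⊆ S) : M.rk T = T.card := by
  have h1 : T ∪ (S \ T) = S := Finset.union_sdiff_of_subset hTS
  have h2 : M.rk (T ∪ (S \ T)) ≤ M.rk T + (S \ T).card := rk_union_le_card M T _
  have h3 := M.rk_le_card T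
  have h4 : (S \ T).card + T.card = S.card := Finset.card_sdiff_add_card_eq_card hTS
  rw [h1] at h2
  omega

lemma span_union (M : RankMatroid A) {S T : Finset A}
    (h : ∀ a ∈ T, M.rk (insert a S) = M.rk S) : M.rk (S ∪ T) = M.rk S := by
  induction T using Finset.induction with
  | empty => simp
  | @insert a T ha IH =>
    have hT : M.rk (S ∪ T) = M.rk S := IH (fun b hb => h b (Finset.mem_insert_of_mem hb))
    have ha' : M.rk (insert a S) = M.rk S := h a (Finset.mem_insert_self a T)
    have hsub := M.rk_submodular (S ∪ T) (insert a S)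
    have h1 : (S ∪ T) ∪ insert a S = insert a (S ∪ T) := by ext x; simp; try tauto
    have h2 : S ⊆ (S ∪ T) ∩ insert a S := by
      intro x hx; simp [hx]
    have h3 : M.rk S ≤ M.rk ((S ∪ T) ∩ insert a S) := M.rk_mono h2
    rw [h1] at hsub
    have h4 : S ⊆ insert a (S ∪ T) := by intro x hx; simp [hx]
    have h5 : M.rk S ≤ M.rk (insert a (S ∪ T)) := M.rk_mono h4
    have h6 : S ∪ insert a T = insert a (S ∪ T) := by ext x; simp; try tauto
    rw [h6]; omega

lemma exists_spanning_ext (M : RankMatroid A) {I Y : Finset A} (hIY : I ⊆ Y)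
    (hI : M.rk I = I.card) :
    ∃ J, I ⊆ J ∧ J ⊆ Y ∧ M.rk J = J.card ∧ M.rk J = M.rk Y := by
  classical
  set 𝒥 := Y.powerset.filter (fun J => I ⊆ J ∧ M.rk J = J.card) with h𝒥
  have hne : 𝒥.Nonempty := ⟨I, by simp [h𝒥, hIY, hI]⟩
  obtain ⟨J, hJ, hJmax⟩ := Finset.exists_max_image 𝒥 Finset.card hne
  simp only [h𝒥, Finset.mem_filter, Finset.mem_powerset] at hJ
  obtain ⟨hJY, hIJ, hJind⟩ := hJ
  refine ⟨J, hIJ, hJY, hJind, ?_⟩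
  have hspan : ∀ a ∈ Y, M.rk (insert a J) = M.rk J := by
    intro a haY
    by_contra hne'
    have hlt : M.rk J < M.rk (insert a J) :=
      lt_of_le_of_ne (M.rk_mono (Finset.subset_insert a J)) (Ne.symm hne')
    have haJ : a ∉ J := by
      intro h; rw [Finset.insert_eq_self.mpr h] at hlt; omega
    have hle := rk_insert_le M a J
    have hcard : (insert a J).card = J.card + 1 := Finset.card_insert_of_notMem haJ
    have hind : M.rk (insert a J) = (insert a J).card := by omega
    have hmem : insert a J ∈ 𝒥 := by
      simp only [h𝒥, Finset.mem_filter, Finset.mem_powerset]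
      exact ⟨Finset.insert_subset haY hJY, hIJ.trans (Finset.subset_insert a J), hind⟩
    have := hJmax _ hmem
    omega
  have h1 : M.rk (J ∪ Y) = M.rk J := span_union M hspan
  have h2 : M.rk Y ≤ M.rk (J ∪ Y) := M.rk_mono Finset.subset_union_right
  have h3 : M.rk J ≤ M.rk Y := M.rk_mono hJY
  omega


lemma mem_Aset {c : A → ℝ} {t : ℝ} {a : A} : a ∈ Aset c t ↔ c a ≤ t := by
  simp [Aset]

lemma Aset_mono {c : A → ℝ} {s t : ℝ} (h : s ≤ t) : Aset c s ⊆ Aset c t := by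
  intro a ha; rw [mem_Aset] at *; exact ha.trans h

lemma greedy_chain (M : RankMatroid A) (c : A → ℝ) (V : Finset ℝ) :
    ∀ hV : V.Nonempty, ∃ S, M.rk S = S.card ∧ S ⊆ Aset c (V.max' hV) ∧
      ∀ v ∈ V, M.rk (S ∩ Aset c v) = M.rk (Aset c v) := by
  induction V using Finset.strongInduction with
  | _ V IH =>
    intro hV
    set m := V.max' hV with hm
    by_cases hV' : (V.erase m).Nonempty
    · have hss : V.erase m ⊂ V := Finset.erase_ssubset (V.max'_mem hV)
      obtain ⟨S', hS'i, hS'sub, hS'span⟩ := IH _ hss hV'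
      have hle : (V.erase m).max' hV' ≤ m :=
        Finset.max'_le _ hV' m (fun y hy => V.le_max' y (Finset.mem_of_mem_erase hy))
      have hS'Y : S' ⊆ Aset c m := hS'sub.trans (Aset_mono hle)
      obtain ⟨J, hSJ, hJY, hJind, hJrk⟩ := exists_spanning_ext M hS'Y hS'i
      refine ⟨J, hJind, hJY, fun v hv => ?_⟩
      by_cases hvm : v = m
      · rw [hvm, Finset.inter_eq_left.mpr hJY, hJrk]
      · have hv' : v ∈ V.erase m := Finset.mem_erase.mpr ⟨hvm, hv⟩
        refine le_antisymm (M.rk_mono Finset.inter_subset_right) ?_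
        calc M.rk (Aset c v) = M.rk (S' ∩ Aset c v) := (hS'span v hv').symm
          _ ≤ M.rk (J ∩ Aset c v) :=
            M.rk_mono (Finset.inter_subset_inter_right hSJ)
    · -- V = {m}
      obtain ⟨J, _, hJY, hJind, hJrk⟩ :=
        exists_spanning_ext M (Finset.empty_subset (Aset c m)) (by simp [rk_empty])
      refine ⟨J, hJind, hJY, fun v hv => ?_⟩
      have hvm : v = m := by
        by_contra hne
        exact hV' ⟨v, Finset.mem_erase.mpr ⟨hne, hv⟩⟩
      rw [hvm, Finset.inter_eq_left.mpr hJY, hJrk]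

lemma exists_greedy (M : RankMatroid A) (c : A → ℝ) :
    ∃ S, M.rk S = S.card ∧ M.rk S = M.rk Finset.univ ∧
      ∀ t : ℝ, M.rk (S ∩ Aset c t) = M.rk (Aset c t) := by
  by_cases hA : (Finset.univ : Finset A).Nonempty
  · have hVne : (Finset.univ.image c).Nonempty := hA.image c
    obtain ⟨S, hSi, hSsub, hSspan⟩ := greedy_chain M c (Finset.univ.image c) hVne
    have hspan : ∀ t : ℝ, M.rk (S ∩ Aset c t) = M.rk (Aset c t) := by
      intro t
      by_cases hne : (Aset c t).Nonempty
      · obtain ⟨b, hb⟩ := hne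
        set W := (Finset.univ.image c).filter (· ≤ t) with hW
        have hWne : W.Nonempty := ⟨c b, by
          simp only [hW, Finset.mem_filter, Finset.mem_image]
          exact ⟨⟨b, Finset.mem_univ b, rfl⟩, mem_Aset.mp hb⟩⟩
        set v := W.max' hWne with hv
        have hvV : v ∈ Finset.univ.image c :=
          Finset.mem_of_mem_filter _ (W.max'_mem hWne)
        have hvt : v ≤ t := (Finset.mem_filter.mp (W.max'_mem hWne)).2
        have hAeq : Aset c t = Aset c v := by
          apply le_antisymm
          · intro a ha
            rw [mem_Aset] at *
            exact W.le_max' (c a) (by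
              simp only [hW, Finset.mem_filter, Finset.mem_image]
              exact ⟨⟨a, Finset.mem_univ a, rfl⟩, ha⟩)
          · exact Aset_mono hvt
        rw [hAeq]; exact hSspan v hvV
      · have : Aset c t = ∅ := Finset.not_nonempty_iff_eq_empty.mp hne
        rw [this]; simp
    have huniv : Aset c ((Finset.univ.image c).max' hVne) = Finset.univ := by
      apply Finset.eq_univ_of_forall
      intro a
      rw [mem_Aset]
      exact Finset.le_max' _ _ (Finset.mem_image_of_mem c (Finset.mem_univ a))
    have h1 : M.rk S = M.rk Finset.univ := by
      have h2 := hspan ((Finset.univ.image c).max' hVne)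
      rw [huniv] at h2
      have h3 : M.rk (S ∩ Finset.univ) ≤ M.rk S := M.rk_mono Finset.inter_subset_left
      have h4 : M.rk S ≤ M.rk Finset.univ := M.rk_mono (Finset.subset_univ S)
      omega
    exact ⟨S, hSi, h1, hspan⟩
  · have huniv : (Finset.univ : Finset A) = ∅ := Finset.not_nonempty_iff_eq_empty.mp hA
    refine ⟨∅, by simp [rk_empty], by rw [huniv], fun t => ?_⟩
    have : Aset c t = ∅ := Finset.eq_empty_of_forall_notMem
      (fun a _ => hA ⟨a, Finset.mem_univ a⟩)
    rw [this]; simp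


lemma measurable_aset_comp (c : A → ℝ) (h : Finset A → ℝ≥0∞) :
    Measurable fun t => h (Aset c t) := by
  classical
  have heq : (fun t => h (Aset c t))
      = fun t => ∑ S : Finset A, ({u : ℝ | Aset c u = S}).indicator (fun _ => h S) t := by
    funext t
    rw [Finset.sum_eq_single (Aset c t)]
    · simp [Set.indicator_apply]
    · intro S _ hS
      simp only [Set.indicator_apply, Set.mem_setOf_eq]
      rw [if_neg]
      intro hEq; exact hS hEq.symm
    · simp
  rw [heq]
  apply Finset.measurable_sum
  intro S _
  apply measurable_const.indicator
  have : {u : ℝ | Aset c u = S} = ⋂ a : A, (if a ∈ S then Set.Ici (c a) else Set.Iio (c a)) := by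
    ext u
    simp only [Set.mem_setOf_eq, Set.mem_iInter, Finset.ext_iff, mem_Aset]
    constructor
    · intro hall a
      split_ifs with ha
      · exact (hall a).mpr ha
      · exact lt_of_not_ge (fun hle => ha ((hall a).mp hle))
    · intro hall a
      have := hall a
      split_ifs at this with ha
      · exact ⟨fun _ => ha, fun _ => this⟩
      · exact ⟨fun hle => absurd hle (not_le.mpr this), fun hmem => absurd hmem ha⟩
  rw [this]
  exact MeasurableSet.iInter (fun a => by split_ifs <;> measurability)

lemma structCost_eq_lintegral (c : A → ℝ) (hc : ∀ a, 0 ≤ c a) (S : Finset A) :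
    structCost (fun a => ENNReal.ofReal (c a)) S
      = ∫⁻ t in Set.Ioi (0:ℝ), (((S.filter (fun a => ¬ c a ≤ t)).card : ℝ≥0∞)) := by
  have key : ∀ t : ℝ, ((S.filter (fun a => ¬ c a ≤ t)).card : ℝ≥0∞)
      = ∑ a ∈ S, (Set.Iio (c a)).indicator (fun _ => (1:ℝ≥0∞)) t := by
    intro t
    rw [Finset.card_filter]
    push_cast
    apply Finset.sum_congr rfl
    intro a _
    simp [Set.indicator_apply, not_le]
  rw [lintegral_congr key]
  rw [lintegral_finset_sum _ (fun a _ => measurable_const.indicator measurableSet_Iio)]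
  unfold structCost
  apply Finset.sum_congr rfl
  intro a _
  rw [lintegral_indicator measurableSet_Iio, setLIntegral_const,
    Measure.restrict_apply measurableSet_Iio, Set.Iio_inter_Ioi, Real.volume_Ioo]
  rw [one_mul]
  congr 1
  simp


lemma card_inter_aset (S : Finset A) (c : A → ℝ) (t : ℝ) :
    S.filter (fun a => c a ≤ t) = S ∩ Aset c t := by
  ext a; simp [Aset, Finset.mem_filter, Finset.mem_inter]

lemma cstar_eq (M : RankMatroid A) (c : A → ℝ) (hc : ∀ a, 0 ≤ c a) :
    cstar M.bases (fun a => ENNReal.ofReal (c a))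
      = ∫⁻ t in Set.Ioi (0:ℝ),
          ((M.rk Finset.univ - M.rk (Aset c t) : ℕ) : ℝ≥0∞) := by
  classical
  obtain ⟨S, hSi, hSr, hSspan⟩ := exists_greedy M c
  have hSb : S ∈ M.bases := by
    simp only [RankMatroid.bases, Finset.mem_filter, Finset.mem_univ, true_and]
    exact ⟨hSi, hSr⟩
  have split : ∀ (T : Finset A) (t : ℝ),
      (T.filter (fun a => ¬ c a ≤ t)).card + (T ∩ Aset c t).card = T.card := by
    intro T t
    rw [← card_inter_aset T c t]
    rw [add_comm]
    exact Finset.card_filter_add_card_filter_not _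
  apply le_antisymm
  · have h1 : cstar M.bases (fun a => ENNReal.ofReal (c a))
        ≤ structCost (fun a => ENNReal.ofReal (c a)) S := iInf₂_le S hSb
    refine h1.trans (le_of_eq ?_)
    rw [structCost_eq_lintegral c hc S]
    apply lintegral_congr
    intro t
    congr 1
    have h2 : (S ∩ Aset c t).card = M.rk (Aset c t) := by
      have := indep_subset M hSi (Finset.inter_subset_left (s₂ := Aset c t))
      rw [← this, hSspan t]
    have h3 := split S t
    have h4 := M.rk_le_card (Aset c t)
    have h5 : M.rk (Aset c t) ≤ M.rk Finset.univ := M.rk_mono (Finset.subset_univ _)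
    omega
  · rw [cstar]
    refine le_iInf₂ fun T hT => ?_
    simp only [RankMatroid.bases, Finset.mem_filter, Finset.mem_univ, true_and] at hT
    obtain ⟨hTi, hTr⟩ := hT
    rw [structCost_eq_lintegral c hc T]
    apply lintegral_mono
    intro t
    rw [Nat.cast_le]
    have h2 : (T ∩ Aset c t).card = M.rk (T ∩ Aset c t) :=
      (indep_subset M hTi (Finset.inter_subset_left (s₂ := Aset c t))).symm
    have h3 : M.rk (T ∩ Aset c t) ≤ M.rk (Aset c t) :=
      M.rk_mono Finset.inter_subset_right
    have h4 := split T t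
    omega

lemma cstar_def (SS : Finset (Finset A)) (c : A → ℝ≥0∞) :
    cstar SS c = ⨅ S ∈ SS, structCost c S := rfl

def del (M : RankMatroid A) (a : A) : RankMatroid A where
  rk S := M.rk (S.erase a)
  rk_le_card S := le_trans (M.rk_le_card _) (Finset.card_le_card (Finset.erase_subset _ _))
  rk_mono := fun S T h => M.rk_mono (Finset.erase_subset_erase _ h)
  rk_submodular S T := by
    have h1 : (S ∪ T).erase a = S.erase a ∪ T.erase a := by
      ext x; simp [Finset.mem_erase, Finset.mem_union]; tauto
    have h2 : (S ∩ T).erase a = S.erase a ∩ T.erase a := by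
      ext x; simp [Finset.mem_erase, Finset.mem_inter]; tauto
    simp only [h1, h2]
    exact M.rk_submodular _ _

lemma structCost_update_top (f : A → ℝ≥0∞) (hf : ∀ x, f x ≠ ⊤) (a : A) (S : Finset A) :
    structCost (Function.update f a ⊤) S
      = if a ∈ S then ⊤ else structCost f S := by
  split_ifs with ha
  · rw [structCost, ENNReal.sum_eq_top]
    exact ⟨a, ha, Function.update_self a ⊤ f⟩
  · rw [structCost, structCost]
    apply Finset.sum_congr rfl
    intro x hx
    refine Function.update_of_ne ?_ ⊤ f
    intro h; subst h; exact ha hx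

lemma mem_del_bases (M : RankMatroid A) (a : A)
    (hbr : M.rk (Finset.univ.erase a) = M.rk Finset.univ) (S : Finset A) :
    S ∈ (del M a).bases ↔ a ∉ S ∧ S ∈ M.bases := by
  simp only [RankMatroid.bases, Finset.mem_filter, Finset.mem_univ, true_and]
  simp only [del]
  constructor
  · rintro ⟨h1, h2⟩
    have haS : a ∉ S := by
      intro haS
      have := M.rk_le_card (S.erase a)
      rw [Finset.card_erase_of_mem haS] at this
      have hcard : 1 ≤ S.card := Finset.card_pos.mpr ⟨a, haS⟩
      omega
    rw [Finset.erase_eq_of_notMem haS] at h1 h2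
    rw [hbr] at h2
    exact ⟨haS, h1, h2⟩
  · rintro ⟨haS, h1, h2⟩
    rw [Finset.erase_eq_of_notMem haS, hbr]
    exact ⟨h1, h2⟩

lemma cstar_update_eq_del (M : RankMatroid A) (a : A) (f : A → ℝ≥0∞) (hf : ∀ x, f x ≠ ⊤)
    (hbr : M.rk (Finset.univ.erase a) = M.rk Finset.univ) :
    cstar M.bases (Function.update f a ⊤) = cstar (del M a).bases f := by
  apply le_antisymm
  · rw [cstar_def ((del M a).bases) f]
    refine le_iInf₂ fun S hS => ?_
    rw [mem_del_bases M a hbr] at hS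
    obtain ⟨haS, hSb⟩ := hS
    calc cstar M.bases (Function.update f a ⊤)
        ≤ structCost (Function.update f a ⊤) S := iInf₂_le S hSb
      _ = structCost f S := by rw [structCost_update_top f hf a S, if_neg haS]
  · rw [cstar_def M.bases (Function.update f a ⊤)]
    refine le_iInf₂ fun S hS => ?_
    rw [structCost_update_top f hf a S]
    split_ifs with haS
    · exact le_top
    · exact iInf₂_le S ((mem_del_bases M a hbr S).mpr ⟨haS, hS⟩)

lemma cstar_update_eq_top (M : RankMatroid A) (a : A) (f : A → ℝ≥0∞) (hf : ∀ x, f x ≠ ⊤)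
    (hbr : M.rk (Finset.univ.erase a) < M.rk Finset.univ) :
    cstar M.bases (Function.update f a ⊤) = ⊤ := by
  rw [cstar, eq_top_iff]
  refine le_iInf₂ fun S hS => ?_
  simp only [RankMatroid.bases, Finset.mem_filter, Finset.mem_univ, true_and] at hS
  have haS : a ∈ S := by
    by_contra haS
    have hsub : S ⊆ Finset.univ.erase a :=
      fun x hx => Finset.mem_erase.mpr ⟨fun h => haS (h ▸ hx), Finset.mem_univ x⟩
    have := M.rk_mono hsub
    omega
  rw [structCost_update_top f hf a S, if_pos haS]

lemma cstar_ne_top (M : RankMatroid A) (c : A → ℝ) :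
    cstar M.bases (fun a => ENNReal.ofReal (c a)) ≠ ⊤ := by
  obtain ⟨S, hSi, hSr, -⟩ := exists_greedy M c
  have hSb : S ∈ M.bases := by
    simp only [RankMatroid.bases, Finset.mem_filter, Finset.mem_univ, true_and]
    exact ⟨hSi, hSr⟩
  have h1 : cstar M.bases (fun a => ENNReal.ofReal (c a))
      ≤ structCost (fun a => ENNReal.ofReal (c a)) S := iInf₂_le S hSb
  have h2 : structCost (fun a => ENNReal.ofReal (c a)) S < ⊤ := by
    rw [structCost]
    exact ENNReal.sum_lt_top.mpr (fun x _ => ENNReal.ofReal_lt_top)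
  exact ne_top_of_le_ne_top h2.ne h1

lemma pay_eq (M : RankMatroid A) (c : A → ℝ) (hc : ∀ a, 0 ≤ c a) (a : A)
    (hbr : M.rk (Finset.univ.erase a) = M.rk Finset.univ) :
    pay M.bases (fun a => ENNReal.ofReal (c a)) a
      = ∫⁻ t in Set.Ioi (0:ℝ),
          ((M.rk (Aset c t) - M.rk ((Aset c t).erase a) : ℕ) : ℝ≥0∞) := by
  have hf : ∀ x, (fun a => ENNReal.ofReal (c a)) x ≠ ⊤ := fun x => ENNReal.ofReal_ne_top
  have hupd : cstar M.bases (Function.update (fun a => ENNReal.ofReal (c a)) a ⊤)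
      = ∫⁻ t in Set.Ioi (0:ℝ),
          ((M.rk Finset.univ - M.rk ((Aset c t).erase a) : ℕ) : ℝ≥0∞) := by
    rw [cstar_update_eq_del M a _ hf hbr, cstar_eq (del M a) c hc]
    apply lintegral_congr
    intro t
    have h1 : (del M a).rk Finset.univ = M.rk Finset.univ := by
      show M.rk (Finset.univ.erase a) = _; rw [hbr]
    have h2 : (del M a).rk (Aset c t) = M.rk ((Aset c t).erase a) := rfl
    rw [h1, h2]
  rw [pay, hupd, cstar_eq M c hc]
  set g := fun t : ℝ => ((M.rk Finset.univ - M.rk (Aset c t) : ℕ) : ℝ≥0∞) with hg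
  set F := fun t : ℝ => ((M.rk Finset.univ - M.rk ((Aset c t).erase a) : ℕ) : ℝ≥0∞) with hF
  have hgm : Measurable g :=
    measurable_aset_comp c (fun S => ((M.rk Finset.univ - M.rk S : ℕ) : ℝ≥0∞))
  have hgfin : ∫⁻ t in Set.Ioi (0:ℝ), g t ≠ ⊤ := by
    rw [← cstar_eq M c hc]
    exact cstar_ne_top M c
  have hle : ∀ t, g t ≤ F t := by
    intro t
    rw [hg, hF, Nat.cast_le]
    exact Nat.sub_le_sub_left (M.rk_mono (Finset.erase_subset _ _)) _
  rw [← lintegral_sub hgm hgfin (Filter.Eventually.of_forall hle)]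
  apply lintegral_congr
  intro t
  rw [hF, hg]
  have h1 : M.rk ((Aset c t).erase a) ≤ M.rk (Aset c t) := M.rk_mono (Finset.erase_subset _ _)
  have h2 : M.rk (Aset c t) ≤ M.rk Finset.univ := M.rk_mono (Finset.subset_univ _)
  rw [← ENNReal.natCast_sub]  -- check name
  congr 1
  omega

lemma sum_bridge (M : RankMatroid A) (S : Finset A) :
    ∑ a : A, ((M.rk S - M.rk (S.erase a) : ℕ) : ℝ≥0∞) = (M.beta S : ℝ≥0∞) := by
  have hnat : ∑ a : A, (M.rk S - M.rk (S.erase a)) = M.beta S := by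
    rw [RankMatroid.beta, Finset.card_filter,
      ← Finset.sum_subset (Finset.subset_univ S)
        (fun a _ haS => by rw [Finset.erase_eq_of_notMem haS]; omega)]
    apply Finset.sum_congr rfl
    intro a haS
    have h1 : M.rk (S.erase a) ≤ M.rk S := M.rk_mono (Finset.erase_subset _ _)
    have h2 : M.rk S ≤ M.rk (S.erase a) + 1 := by
      have := rk_insert_le M a (S.erase a)
      rwa [Finset.insert_erase haS] at this
    split_ifs with h <;> omega
  rw [← Nat.cast_sum, hnat]

end VCGAux

/-- For a matroid with arbitrary nonnegative costs,
`C_VCG(M) = C*(M) + ∫_0^∞ β(A(t)) dt`, both sides possibly `+∞`. -/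
theorem matroid_vcg_cost_integral
    (M : RankMatroid A) (c : A → ℝ) (hc : ∀ a, 0 ≤ c a) :
    cvcg M.bases (fun a => ENNReal.ofReal (c a))
      = cstar M.bases (fun a => ENNReal.ofReal (c a))
        + ∫⁻ t in Set.Ioi (0:ℝ), ((M.beta (Aset c t) : ℝ≥0∞)) := by
  classical
  set f := fun a => ENNReal.ofReal (c a) with hfdef
  have hf : ∀ x, f x ≠ ⊤ := fun x => ENNReal.ofReal_ne_top
  by_cases hbl : ∀ a : A, M.rk (Finset.univ.erase a) = M.rk Finset.univ
  · rw [cvcg]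
    congr 1
    calc ∑ a, pay M.bases f a
        = ∑ a, ∫⁻ t in Set.Ioi (0:ℝ),
            ((M.rk (Aset c t) - M.rk ((Aset c t).erase a) : ℕ) : ℝ≥0∞) :=
          Finset.sum_congr rfl (fun a _ => VCGAux.pay_eq M c hc a (hbl a))
      _ = ∫⁻ t in Set.Ioi (0:ℝ), ∑ a,
            ((M.rk (Aset c t) - M.rk ((Aset c t).erase a) : ℕ) : ℝ≥0∞) :=
          (lintegral_finset_sum _ (fun a _ =>
            VCGAux.measurable_aset_comp c
              (fun S => ((M.rk S - M.rk (S.erase a) : ℕ) : ℝ≥0∞)))).symm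
      _ = ∫⁻ t in Set.Ioi (0:ℝ), (M.beta (Aset c t) : ℝ≥0∞) :=
          lintegral_congr (fun t => VCGAux.sum_bridge M (Aset c t))
  · push_neg at hbl
    obtain ⟨a, ha⟩ := hbl
    have halt : M.rk (Finset.univ.erase a) < M.rk Finset.univ :=
      lt_of_le_of_ne (M.rk_mono (Finset.erase_subset _ _)) ha
    have hpaya : pay M.bases f a = ⊤ := by
      rw [pay, VCGAux.cstar_update_eq_top M a f hf halt]
      exact ENNReal.top_sub (VCGAux.cstar_ne_top M c)
    have hsum : ∑ a', pay M.bases f a' = ⊤ :=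
      ENNReal.sum_eq_top.mpr ⟨a, Finset.mem_univ a, hpaya⟩
    have hint : ∫⁻ t in Set.Ioi (0:ℝ), (M.beta (Aset c t) : ℝ≥0∞) = ⊤ := by
      have hAne : (Finset.univ : Finset A).Nonempty := ⟨a, Finset.mem_univ a⟩
      set T : ℝ := Finset.univ.sup' hAne c + 1 with hT
      have hT0 : 0 < T := by
        have h1 : c a ≤ Finset.univ.sup' hAne c := Finset.le_sup' c (Finset.mem_univ a)
        have := hc a
        rw [hT]; linarith
      have hTc : ∀ x : A, c x ≤ T := by
        intro x
        have h1 : c x ≤ Finset.univ.sup' hAne c := Finset.le_sup' c (Finset.mem_univ x)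
        rw [hT]; linarith
      rw [eq_top_iff]
      calc (⊤ : ℝ≥0∞) = ∫⁻ t in Set.Ioi (0:ℝ),
            (Set.Ici T).indicator (fun _ => (1:ℝ≥0∞)) t := by
            rw [lintegral_indicator measurableSet_Ici, setLIntegral_const,
              Measure.restrict_apply measurableSet_Ici, one_mul]
            have hsub : Set.Ici T ∩ Set.Ioi (0:ℝ) = Set.Ici T := by
              apply Set.inter_eq_left.mpr
              intro x hx
              exact lt_of_lt_of_le hT0 hx
            rw [hsub, Real.volume_Ici]
        _ ≤ ∫⁻ t in Set.Ioi (0:ℝ), (M.beta (Aset c t) : ℝ≥0∞) := by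
            apply lintegral_mono
            intro t
            rw [Set.indicator_apply]
            split_ifs with hmem
            · have huniv : Aset c t = Finset.univ :=
                Finset.eq_univ_of_forall (fun x => VCGAux.mem_Aset.mpr ((hTc x).trans hmem))
              show (1:ℝ≥0∞) ≤ (M.beta (Aset c t) : ℝ≥0∞)
              rw [huniv]
              have hbpos : 0 < M.beta Finset.univ := by
                rw [RankMatroid.beta]
                apply Finset.card_pos.mpr
                exact ⟨a, Finset.mem_filter.mpr ⟨Finset.mem_univ a, halt⟩⟩
              exact_mod_cast Nat.one_le_cast.mpr hbpos
            · exact zero_le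
    rw [cvcg, hsum, hint]
end

section
/- For a matroid M with arbitrary nonnegative costs, the incentive payment of any element a equals p(a) = ∫_0^∞ ( rk(A(t)) − rk(A(t)∖{a}) ) dt; equivalently, p(a) is the Lebesgue measure of the set of times t at which a is a bridge of A(t). -/
open MeasureTheory ProbabilityTheory ENNReal
open scoped BigOperators

variable {A : Type*} [Fintype A] [DecidableEq A]

namespace MIPAux
open Finset
open scoped Classical

variable {A : Type*} [Fintype A] [DecidableEq A]

noncomputable def keyL (κ : A → ℝ≥0∞) (b : A) : ℝ≥0∞ ×ₗ ℕ :=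
  toLex (κ b, ((Fintype.equivFin A) b : ℕ))

lemma keyL_inj (κ : A → ℝ≥0∞) : Function.Injective (keyL κ) := by
  intro x y h
  have h2 : (κ x, ((Fintype.equivFin A) x : ℕ)) = (κ y, ((Fintype.equivFin A) y : ℕ)) :=
    toLex.injective h
  have h3 : ((Fintype.equivFin A) x : ℕ) = ((Fintype.equivFin A) y : ℕ) := congrArg Prod.snd h2
  exact (Fintype.equivFin A).injective (Fin.val_injective h3)

lemma keyL_lt_imp (κ : A → ℝ≥0∞) {x y : A} (h : keyL κ x < keyL κ y) : κ x ≤ κ y := by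
  rcases Prod.Lex.lt_iff.mp h with h1 | ⟨h1, _⟩
  · exact le_of_lt h1
  · exact le_of_eq h1

noncomputable def pred (κ : A → ℝ≥0∞) (b : A) : Finset A :=
  univ.filter (fun b' => keyL κ b' < keyL κ b)

variable (M : RankMatroid A)

lemma rk_empty : M.rk ∅ = 0 := Nat.le_zero.mp (by simpa using M.rk_le_card ∅)

lemma rk_insert_le (S : Finset A) (b : A) : M.rk (insert b S) ≤ M.rk S + 1 := by
  have h := M.rk_submodular S {b}
  have h1 : M.rk {b} ≤ 1 := by simpa using M.rk_le_card {b}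
  have h2 : S ∪ {b} = insert b S := by rw [Finset.union_comm, ← Finset.insert_eq]
  rw [h2] at h
  omega

lemma rk_union_le_add_card (S X : Finset A) : M.rk (S ∪ X) ≤ M.rk S + X.card := by
  induction X using Finset.induction_on with
  | empty => simpa using le_refl (M.rk S)
  | @insert b X hb ih =>
    have h1 : S ∪ insert b X = insert b (S ∪ X) := by rw [Finset.union_insert]
    rw [h1, Finset.card_insert_of_notMem hb]
    have h2 := rk_insert_le M (S ∪ X) b
    omega

lemma indep_subset {S T : Finset A} (hST : S ⊆ T) (hT : M.rk T = T.card) :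
    M.rk S = S.card := by
  have h1 : M.rk (S ∪ (T \ S)) ≤ M.rk S + (T \ S).card := rk_union_le_add_card M S (T \ S)
  have h2 : S ∪ (T \ S) = T := Finset.union_sdiff_of_subset hST
  have h3 : (T \ S).card = T.card - S.card := Finset.card_sdiff_of_subset hST
  have h4 := M.rk_le_card S
  have h5 := Finset.card_le_card hST
  rw [h2] at h1
  omega

noncomputable def Bg (M : RankMatroid A) (κ : A → ℝ≥0∞) : Finset A :=
  univ.filter (fun b => M.rk (insert b (pred κ b)) ≠ M.rk (pred κ b))

lemma greedy_prefix (κ : A → ℝ≥0∞) :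
    ∀ P : Finset A, (∀ b ∈ P, pred κ b ⊆ P) →
      (Bg M κ ∩ P).card = M.rk P ∧ M.rk (Bg M κ ∩ P) = (Bg M κ ∩ P).card := by
  intro P
  induction P using Finset.strongInduction with
  | _ P ih =>
    intro hP
    rcases P.eq_empty_or_nonempty with rfl | hne
    · simp [rk_empty]
    obtain ⟨b, hbP, hmax⟩ := Finset.exists_max_image P (keyL κ) hne
    have hQsub : pred κ b ⊆ P := hP b hbP
    have hbQ : b ∉ pred κ b := by simp [pred]
    have hPeq : P = insert b (pred κ b) := by
      apply Finset.Subset.antisymm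
      · intro b' hb'
        rcases eq_or_ne b' b with rfl | hne'
        · exact Finset.mem_insert_self _ _
        · have hle := hmax b' hb'
          have hlt : keyL κ b' < keyL κ b :=
            lt_of_le_of_ne hle (fun h => hne' (keyL_inj κ h))
          exact Finset.mem_insert_of_mem (by simp [pred, hlt])
      · intro b' hb'
        rcases Finset.mem_insert.mp hb' with rfl | h
        · exact hbP
        · exact hQsub h
    set Q := pred κ b with hQdef
    have hQDC : ∀ b' ∈ Q, pred κ b' ⊆ Q := by
      intro b' hb' x hx
      simp only [hQdef, pred, mem_filter, mem_univ, true_and] at hb' hx ⊢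
      exact lt_trans hx hb'
    have hss : Q ⊂ P := by rw [hPeq]; exact Finset.ssubset_insert hbQ
    obtain ⟨ih1, ih2⟩ := ih Q hss hQDC
    have hBQ : Bg M κ ∩ Q ⊆ Q := Finset.inter_subset_right
    have hbBQ : b ∉ Bg M κ ∩ Q := fun h => hbQ (hBQ h)
    by_cases hbB : b ∈ Bg M κ
    · have hne' : M.rk (insert b Q) ≠ M.rk Q := by
        simpa [Bg, hQdef] using hbB
      have hinc : M.rk (insert b Q) = M.rk Q + 1 := by
        have h1 := rk_insert_le M Q b
        have h2 : M.rk Q ≤ M.rk (insert b Q) := M.rk_mono (Finset.subset_insert _ _)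
        omega
      have hBP : Bg M κ ∩ P = insert b (Bg M κ ∩ Q) := by
        rw [hPeq, Finset.inter_comm, Finset.insert_inter_of_mem hbB, Finset.inter_comm]
      have hcard : (insert b (Bg M κ ∩ Q)).card = (Bg M κ ∩ Q).card + 1 :=
        Finset.card_insert_of_notMem hbBQ
      have hrk2 : M.rk (insert b (Bg M κ ∩ Q)) = (insert b (Bg M κ ∩ Q)).card := by
        have hsub := M.rk_submodular (insert b (Bg M κ ∩ Q)) Q
        have hU : insert b (Bg M κ ∩ Q) ∪ Q = insert b Q := by
          rw [Finset.insert_union, Finset.union_eq_right.mpr hBQ]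
        have hI : insert b (Bg M κ ∩ Q) ∩ Q = Bg M κ ∩ Q := by
          rw [Finset.insert_inter_of_notMem hbQ]
          exact Finset.inter_eq_left.mpr hBQ
        rw [hU, hI] at hsub
        have hle := M.rk_le_card (insert b (Bg M κ ∩ Q))
        omega
      constructor
      · rw [hBP, hPeq, hcard, hinc, ih1]
      · rw [hBP, hrk2]
    · have heq : M.rk (insert b Q) = M.rk Q := by
        have := hbB
        simp only [Bg, hQdef, mem_filter, mem_univ, true_and, not_not] at this
        exact this
      have hBP : Bg M κ ∩ P = Bg M κ ∩ Q := by
        rw [hPeq, Finset.inter_comm, Finset.insert_inter_of_notMem hbB, Finset.inter_comm]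
      constructor
      · rw [hBP, hPeq, heq, ih1]
      · rw [hBP, ih2]

lemma Bg_basis (κ : A → ℝ≥0∞) : Bg M κ ∈ M.bases := by
  obtain ⟨h1, h2⟩ := greedy_prefix M κ univ (fun b _ => Finset.subset_univ _)
  rw [Finset.inter_univ] at h1 h2
  simp only [RankMatroid.bases, mem_filter, mem_univ, true_and]
  exact ⟨h2, h2.trans h1⟩

noncomputable def Ak (κ : A → ℝ≥0∞) (t : ℝ) : Finset A :=
  univ.filter (fun b => κ b ≤ ENNReal.ofReal t)

lemma Ak_pref (κ : A → ℝ≥0∞) (t : ℝ) : ∀ b ∈ Ak κ t, pred κ b ⊆ Ak κ t := by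
  intro b hb x hx
  simp only [Ak, mem_filter, mem_univ, true_and] at hb ⊢
  simp only [pred, mem_filter, mem_univ, true_and] at hx
  exact le_trans (keyL_lt_imp κ hx) hb

lemma count_card (κ : A → ℝ≥0∞) (t : ℝ) (T : Finset A) :
    (T.filter (fun b => ¬ κ b ≤ ENNReal.ofReal t)).card = T.card - (T ∩ Ak κ t).card := by
  have h1 : T ∩ Ak κ t = T.filter (fun b => κ b ≤ ENNReal.ofReal t) := by
    ext b; simp [Ak, Finset.mem_inter]
  rw [h1]
  have h2 := Finset.card_filter_add_card_filter_not
    (s := T) (p := fun b => κ b ≤ ENNReal.ofReal t)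
  omega

lemma lint_thresh (x : ℝ≥0∞) :
    ∫⁻ t in Set.Ioi (0:ℝ), (if ENNReal.ofReal t < x then (1:ℝ≥0∞) else 0) = x := by
  have hmeas : MeasurableSet {t : ℝ | ENNReal.ofReal t < x} :=
    ENNReal.measurable_ofReal measurableSet_Iio
  have h1 : ∀ t : ℝ, (if ENNReal.ofReal t < x then (1:ℝ≥0∞) else 0)
      = Set.indicator {t : ℝ | ENNReal.ofReal t < x} 1 t := by
    intro t; simp [Set.indicator_apply]
  rw [lintegral_congr h1, lintegral_indicator_one hmeas,
    Measure.restrict_apply hmeas]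
  rcases eq_or_ne x ⊤ with rfl | hx
  · have h2 : {t : ℝ | ENNReal.ofReal t < ⊤} ∩ Set.Ioi 0 = Set.Ioi 0 := by
      ext t; simp [ENNReal.ofReal_lt_top]
    rw [h2, Real.volume_Ioi]
  · have h2 : {t : ℝ | ENNReal.ofReal t < x} ∩ Set.Ioi 0 = Set.Ioo 0 x.toReal := by
      ext t
      simp only [Set.mem_inter_iff, Set.mem_setOf_eq, Set.mem_Ioi, Set.mem_Ioo]
      constructor
      · rintro ⟨ha, hb⟩
        exact ⟨hb, (ENNReal.ofReal_lt_iff_lt_toReal (le_of_lt hb) hx).mp ha⟩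
      · rintro ⟨ha, hb⟩
        exact ⟨(ENNReal.ofReal_lt_iff_lt_toReal (le_of_lt ha) hx).mpr hb, ha⟩
    rw [h2, Real.volume_Ioo, sub_zero, ENNReal.ofReal_toReal hx]

lemma structCost_integral (κ : A → ℝ≥0∞) (T : Finset A) :
    structCost κ T
      = ∫⁻ t in Set.Ioi (0:ℝ),
          ((T.filter (fun b => ¬ κ b ≤ ENNReal.ofReal t)).card : ℝ≥0∞) := by
  have hfun : ∀ t : ℝ, ((T.filter (fun b => ¬ κ b ≤ ENNReal.ofReal t)).card : ℝ≥0∞)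
      = ∑ b ∈ T, (if ENNReal.ofReal t < κ b then (1:ℝ≥0∞) else 0) := by
    intro t
    rw [Finset.card_filter]
    push_cast
    exact Finset.sum_congr rfl (fun b _ => by simp [not_le])
  calc structCost κ T = ∑ b ∈ T, κ b := rfl
    _ = ∑ b ∈ T, ∫⁻ t in Set.Ioi (0:ℝ), (if ENNReal.ofReal t < κ b then (1:ℝ≥0∞) else 0) :=
        Finset.sum_congr rfl (fun b _ => (lint_thresh (κ b)).symm)
    _ = ∫⁻ t in Set.Ioi (0:ℝ), ∑ b ∈ T, (if ENNReal.ofReal t < κ b then (1:ℝ≥0∞) else 0) := by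
        refine (lintegral_finset_sum T (fun b _ => ?_)).symm
        exact Measurable.ite (ENNReal.measurable_ofReal measurableSet_Iio)
          measurable_const measurable_const
    _ = _ := lintegral_congr (fun t => (hfun t).symm)

theorem cstar_eq (κ : A → ℝ≥0∞) :
    cstar M.bases κ
      = ∫⁻ t in Set.Ioi (0:ℝ),
          ((M.rk Finset.univ - M.rk (Ak κ t) : ℕ) : ℝ≥0∞) := by
  have huniv := (greedy_prefix M κ univ (fun b _ => Finset.subset_univ _)).1
  rw [Finset.inter_univ] at huniv
  apply le_antisymm
  · calc cstar M.bases κ ≤ structCost κ (Bg M κ) := iInf₂_le _ (Bg_basis M κ)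
      _ = ∫⁻ t in Set.Ioi (0:ℝ),
            (((Bg M κ).filter (fun b => ¬ κ b ≤ ENNReal.ofReal t)).card : ℝ≥0∞) :=
          structCost_integral κ (Bg M κ)
      _ = _ := by
          refine lintegral_congr (fun t => ?_)
          have h1 := (greedy_prefix M κ (Ak κ t) (Ak_pref κ t)).1
          rw [count_card, h1, huniv]
  · refine le_iInf₂ (fun T hT => ?_)
    simp only [RankMatroid.bases, mem_filter, mem_univ, true_and] at hT
    rw [structCost_integral κ T]
    refine lintegral_mono (fun t => ?_)
    have hTA : M.rk (T ∩ Ak κ t) = (T ∩ Ak κ t).card :=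
      indep_subset M Finset.inter_subset_left hT.1
    have h2 : (T ∩ Ak κ t).card ≤ M.rk (Ak κ t) := by
      rw [← hTA]; exact M.rk_mono Finset.inter_subset_right
    have h3 : M.rk Finset.univ = T.card := hT.2.symm.trans hT.1
    have h4 : (T ∩ Ak κ t).card ≤ T.card := Finset.card_le_card Finset.inter_subset_left
    rw [count_card]
    have h5 : (M.rk Finset.univ - M.rk (Ak κ t) : ℕ) ≤ T.card - (T ∩ Ak κ t).card := by omega
    exact Nat.mono_cast h5

lemma meas_pred (c : A → ℝ) (P : Finset A → Prop) :
    MeasurableSet {t : ℝ | P (Aset c t)} := by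
  have h1 : {t : ℝ | P (Aset c t)}
      = ⋃ S ∈ (univ : Finset (Finset A)).filter P, {t : ℝ | Aset c t = S} := by
    ext t
    simp only [Set.mem_setOf_eq, Set.mem_iUnion, mem_filter, mem_univ, true_and]
    constructor
    · intro h; exact ⟨Aset c t, h, rfl⟩
    · rintro ⟨S, hS, hEq⟩; rw [hEq]; exact hS
  rw [h1]
  refine Finset.measurableSet_biUnion _ (fun S _ => ?_)
  have h2 : {t : ℝ | Aset c t = S} = ⋂ b : A, {t : ℝ | (c b ≤ t) ↔ (b ∈ S)} := by
    ext t
    simp only [Set.mem_setOf_eq, Set.mem_iInter, Finset.ext_iff, Aset, mem_filter,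
      mem_univ, true_and]
  rw [h2]
  refine MeasurableSet.iInter (fun b => ?_)
  by_cases hb : b ∈ S
  · simp only [hb, iff_true]
    exact measurableSet_Ici
  · simp only [hb, iff_false, not_le]
    exact measurableSet_Iio

lemma meas_fun (c : A → ℝ) (F : Finset A → ℝ≥0∞) :
    Measurable (fun t : ℝ => F (Aset c t)) := by
  intro s _
  exact meas_pred c (fun S => F S ∈ s)

end MIPAux

/-- For a matroid with arbitrary nonnegative costs, the incentive payment
of an element `a` is `p(a) = ∫_0^∞ (rk(A(t)) - rk(A(t)∖{a})) dt`; equivalently it is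
the Lebesgue measure of the set of times `t` at which `a` is a bridge of `A(t)`. -/
theorem matroid_incentive_payment_integral
    (M : RankMatroid A) (c : A → ℝ) (hc : ∀ a, 0 ≤ c a) (a : A) :
    pay M.bases (fun b => ENNReal.ofReal (c b)) a
        = ∫⁻ t in Set.Ioi (0:ℝ),
            ((M.rk (Aset c t) - M.rk ((Aset c t).erase a) : ℕ) : ℝ≥0∞) ∧
    pay M.bases (fun b => ENNReal.ofReal (c b)) a
        = volume {t : ℝ | 0 < t ∧ a ∈ Aset c t
            ∧ M.rk ((Aset c t).erase a) < M.rk (Aset c t)} := by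
  classical
  set κ0 : A → ℝ≥0∞ := fun b => ENNReal.ofReal (c b) with hκ0
  set κi : A → ℝ≥0∞ := Function.update κ0 a ⊤ with hκi
  have hA0 : ∀ t ∈ Set.Ioi (0:ℝ), MIPAux.Ak κ0 t = Aset c t := by
    intro t ht
    ext b
    simp only [MIPAux.Ak, Aset, Finset.mem_filter, Finset.mem_univ, true_and, hκ0]
    exact ENNReal.ofReal_le_ofReal_iff (le_of_lt ht)
  have hAi : ∀ t ∈ Set.Ioi (0:ℝ), MIPAux.Ak κi t = (Aset c t).erase a := by
    intro t ht
    ext b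
    simp only [MIPAux.Ak, Aset, Finset.mem_filter, Finset.mem_univ, true_and,
      Finset.mem_erase]
    rcases eq_or_ne b a with rfl | hb
    · simp only [hκi, Function.update_self, ne_eq, not_true_eq_false, false_and, iff_false]
      exact fun h => absurd (top_le_iff.mp h) ENNReal.ofReal_ne_top
    · simp only [hκi, Function.update_of_ne hb, hκ0, ne_eq, hb, not_false_eq_true, true_and]
      exact ENNReal.ofReal_le_ofReal_iff (le_of_lt ht)
  set r := M.rk Finset.univ with hr
  have h0 : cstar M.bases κ0
      = ∫⁻ t in Set.Ioi (0:ℝ), ((r - M.rk (Aset c t) : ℕ) : ℝ≥0∞) := by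
    rw [MIPAux.cstar_eq M κ0]
    exact setLIntegral_congr_fun measurableSet_Ioi
      (fun t ht => by rw [hA0 t ht])
  have hi : cstar M.bases κi
      = ∫⁻ t in Set.Ioi (0:ℝ), ((r - M.rk ((Aset c t).erase a) : ℕ) : ℝ≥0∞) := by
    rw [MIPAux.cstar_eq M κi]
    exact setLIntegral_congr_fun measurableSet_Ioi
      (fun t ht => by rw [hAi t ht])
  have hfin : cstar M.bases κ0 ≠ ⊤ := by
    have h1 : cstar M.bases κ0 ≤ structCost κ0 (MIPAux.Bg M κ0) :=
      iInf₂_le _ (MIPAux.Bg_basis M κ0)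
    refine ne_top_of_le_ne_top ?_ h1
    have : structCost κ0 (MIPAux.Bg M κ0) < ⊤ := by
      refine ENNReal.sum_lt_top.mpr (fun b _ => ?_)
      exact ENNReal.ofReal_lt_top
    exact this.ne
  have hmono : ∀ t : ℝ, M.rk ((Aset c t).erase a) ≤ M.rk (Aset c t) :=
    fun t => M.rk_mono (Finset.erase_subset _ _)
  have hrle : ∀ t : ℝ, M.rk (Aset c t) ≤ r :=
    fun t => M.rk_mono (Finset.subset_univ _)
  have hmeas0 : Measurable (fun t : ℝ => ((r - M.rk (Aset c t) : ℕ) : ℝ≥0∞)) :=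
    MIPAux.meas_fun c (fun S => ((r - M.rk S : ℕ) : ℝ≥0∞))
  have hsub : ∫⁻ t in Set.Ioi (0:ℝ),
        (((r - M.rk ((Aset c t).erase a) : ℕ) : ℝ≥0∞)
          - ((r - M.rk (Aset c t) : ℕ) : ℝ≥0∞))
      = (∫⁻ t in Set.Ioi (0:ℝ), ((r - M.rk ((Aset c t).erase a) : ℕ) : ℝ≥0∞))
        - ∫⁻ t in Set.Ioi (0:ℝ), ((r - M.rk (Aset c t) : ℕ) : ℝ≥0∞) := by
    refine lintegral_sub hmeas0 ?_ (Filter.Eventually.of_forall fun t => ?_)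
    · rw [← h0]; exact hfin
    · have h1 := hmono t
      have h2 := hrle t
      have h3 : (r - M.rk (Aset c t) : ℕ) ≤ r - M.rk ((Aset c t).erase a) := by omega
      show ((r - M.rk (Aset c t) : ℕ) : ℝ≥0∞) ≤ ((r - M.rk ((Aset c t).erase a) : ℕ) : ℝ≥0∞)
      exact_mod_cast h3
  have hpt : ∀ t : ℝ,
      (((r - M.rk ((Aset c t).erase a) : ℕ) : ℝ≥0∞) - ((r - M.rk (Aset c t) : ℕ) : ℝ≥0∞))
        = ((M.rk (Aset c t) - M.rk ((Aset c t).erase a) : ℕ) : ℝ≥0∞) := by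
    intro t
    rw [← ENNReal.natCast_sub]
    congr 1
    have h1 := hmono t
    have h2 := hrle t
    omega
  have goal1 : pay M.bases κ0 a
      = ∫⁻ t in Set.Ioi (0:ℝ),
          ((M.rk (Aset c t) - M.rk ((Aset c t).erase a) : ℕ) : ℝ≥0∞) := by
    show cstar M.bases (Function.update κ0 a ⊤) - cstar M.bases κ0 = _
    rw [← hκi, hi, h0, ← hsub]
    exact lintegral_congr hpt
  refine ⟨goal1, ?_⟩
  rw [goal1]
  set E : Set ℝ :=
    {t : ℝ | a ∈ Aset c t ∧ M.rk ((Aset c t).erase a) < M.rk (Aset c t)} with hE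
  have hEmeas : MeasurableSet E :=
    MIPAux.meas_pred c (fun S => a ∈ S ∧ M.rk (S.erase a) < M.rk S)
  have hind : ∀ t : ℝ, ((M.rk (Aset c t) - M.rk ((Aset c t).erase a) : ℕ) : ℝ≥0∞)
      = Set.indicator E 1 t := by
    intro t
    by_cases h : a ∈ Aset c t ∧ M.rk ((Aset c t).erase a) < M.rk (Aset c t)
    · have h1 : M.rk (Aset c t) ≤ M.rk ((Aset c t).erase a) + 1 := by
        have h2 := MIPAux.rk_insert_le M ((Aset c t).erase a) a
        rwa [Finset.insert_erase h.1] at h2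
      have h3 : M.rk (Aset c t) - M.rk ((Aset c t).erase a) = 1 := by
        have := h.2; omega
      rw [h3]
      simp [hE, Set.indicator_apply, h]
    · have h3 : M.rk (Aset c t) - M.rk ((Aset c t).erase a) = 0 := by
        rcases not_and_or.mp h with h1 | h1
        · rw [Finset.erase_eq_of_notMem h1]; omega
        · omega
      rw [h3]
      simp [hE, Set.indicator_apply, h]
  rw [lintegral_congr hind, lintegral_indicator_one hEmeas, Measure.restrict_apply hEmeas]
  congr 1
  ext t
  simp only [hE, Set.mem_inter_iff, Set.mem_setOf_eq, Set.mem_Ioi]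
  tauto
end

section
/- For a matroid M with arbitrary nonnegative costs, the VCG threshold of an element a satisfies v(I,a) = ∫_0^∞ ( rk(A(t) ∪ {a}) − rk(A(t)∖{a}) ) dt. -/
open MeasureTheory ProbabilityTheory ENNReal
open scoped BigOperators

variable {A : Type*} [Fintype A] [DecidableEq A]

set_option linter.unusedSectionVars false

private lemma layer_meas' (x : ℝ≥0∞) :
    Measurable (fun t : ℝ => if ENNReal.ofReal t < x then (1:ℝ≥0∞) else 0) := by
  have h : Antitone (fun t : ℝ => if ENNReal.ofReal t < x then (1:ℝ≥0∞) else 0) := by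
    intro t1 t2 hle
    by_cases h2 : ENNReal.ofReal t2 < x
    · have h1 : ENNReal.ofReal t1 < x :=
        lt_of_le_of_lt (ENNReal.ofReal_le_ofReal hle) h2
      simp [h1, h2]
    · simp only [if_neg h2]
      exact zero_le
  exact h.measurable

private lemma layer' (x : ℝ≥0∞) :
    ∫⁻ t in Set.Ioi (0:ℝ), (if ENNReal.ofReal t < x then (1:ℝ≥0∞) else 0) = x := by
  rcases eq_or_ne x ⊤ with hx | hx
  · subst hx
    rw [setLIntegral_congr_fun measurableSet_Ioi
      ((fun t (ht : t ∈ Set.Ioi (0:ℝ)) => by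
        simp [ENNReal.ofReal_lt_top] : ∀ t ∈ Set.Ioi (0:ℝ),
          (if ENNReal.ofReal t < (⊤:ℝ≥0∞) then (1:ℝ≥0∞) else 0) = 1))]
    simp [Real.volume_Ioi]
  · set r := x.toReal with hr
    have key : ∀ t, (Set.Ioi (0:ℝ)).indicator
        (fun t => if ENNReal.ofReal t < x then (1:ℝ≥0∞) else 0) t
        = (Set.Ioo (0:ℝ) r).indicator (fun _ => (1:ℝ≥0∞)) t := by
      intro t
      by_cases ht : (0:ℝ) < t
      · rw [Set.indicator_of_mem (Set.mem_Ioi.2 ht)]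
        have : ENNReal.ofReal t < x ↔ t < r :=
          ENNReal.ofReal_lt_iff_lt_toReal ht.le hx
        by_cases h2 : t < r
        · rw [if_pos (this.2 h2), Set.indicator_of_mem (Set.mem_Ioo.2 ⟨ht, h2⟩)]
        · rw [if_neg (fun hh => h2 (this.1 hh)),
            Set.indicator_of_notMem (fun hm => h2 (Set.mem_Ioo.1 hm).2)]
      · rw [Set.indicator_of_notMem (fun hm => ht (Set.mem_Ioi.1 hm)),
          Set.indicator_of_notMem (fun hm => ht (Set.mem_Ioo.1 hm).1)]
    rw [← lintegral_indicator measurableSet_Ioi, lintegral_congr key,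
      lintegral_indicator measurableSet_Ioo]
    simp [Real.volume_Ioo, hr, ENNReal.ofReal_toReal hx]

private lemma indep_subset' (M : RankMatroid A) {T U : Finset A} (hT : M.rk T = T.card)
    (hU : U ⊆ T) : M.rk U = U.card := by
  have h1 := M.rk_submodular U (T \ U)
  rw [Finset.union_sdiff_of_subset hU, Finset.inter_sdiff_self] at h1
  have h2 := M.rk_le_card (T \ U)
  have h3 := M.rk_le_card U
  have h4 : (T \ U).card = T.card - U.card := Finset.card_sdiff_of_subset hU
  have h5 : U.card ≤ T.card := Finset.card_le_card hU
  omega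

private lemma greedy' (M : RankMatroid A) (c : A → ℝ≥0∞) (S : Finset A) :
    ∃ B ⊆ S, M.rk B = B.card ∧
      ∀ t, (B.filter (fun x => c x ≤ t)).card = M.rk (S.filter (fun x => c x ≤ t)) := by
  induction S using Finset.strongInduction with
  | _ S ih =>
    rcases S.eq_empty_or_nonempty with rfl | hS
    · refine ⟨∅, Finset.Subset.refl _, ?_, fun t => ?_⟩
      · have := M.rk_le_card ∅; simpa using this
      · have := M.rk_le_card (∅ : Finset A)
        simp at this ⊢
        omega
    · obtain ⟨m, hmS, hmax⟩ := Finset.exists_max_image S c hS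
      set S' := S.erase m with hS'
      have hssub : S' ⊂ S := Finset.erase_ssubset hmS
      obtain ⟨B', hB'sub, hB'indep, hB'filt⟩ := ih S' hssub
      have hmS' : m ∉ S' := Finset.notMem_erase m S
      have hins : insert m S' = S := Finset.insert_erase hmS
      have hup : M.rk S ≤ M.rk S' + 1 := by
        have h1 := M.rk_submodular S' {m}
        have h2 : S' ∪ {m} = S := by rw [Finset.union_comm]; simpa using hins
        have h3 : S' ∩ {m} = ∅ := by
          simp [Finset.inter_singleton_of_notMem hmS']
        have h4 : M.rk {m} ≤ 1 := by simpa using M.rk_le_card {m}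
        have h5 : M.rk ∅ ≤ 0 := by simpa using M.rk_le_card ∅
        rw [h2, h3] at h1
        omega
      have hlow : M.rk S' ≤ M.rk S := M.rk_mono (Finset.erase_subset m S)
      have hcardB' : B'.card = M.rk S' := by
        have := hB'filt ⊤
        simpa [Finset.filter_true_of_mem (fun x _ => le_top)] using this
      have hfiltS : ∀ t, ¬ c m ≤ t →
          S.filter (fun x => c x ≤ t) = S'.filter (fun x => c x ≤ t) := by
        intro t ht
        rw [hS', Finset.filter_erase, Finset.erase_eq_of_notMem]
        simp [ht]
      by_cases hcase : M.rk S = M.rk S'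
      · refine ⟨B', hB'sub.trans (Finset.erase_subset m S), hB'indep, fun t => ?_⟩
        by_cases htm : c m ≤ t
        · have hallS : S.filter (fun x => c x ≤ t) = S :=
            Finset.filter_true_of_mem (fun x hx => le_trans (hmax x hx) htm)
          have hallB : B'.filter (fun x => c x ≤ t) = B' :=
            Finset.filter_true_of_mem
              (fun x hx => le_trans (hmax x (Finset.erase_subset m S (hB'sub hx))) htm)
          rw [hallS, hallB, hcardB', hcase]
        · rw [hfiltS t htm, hB'filt t]
      · have hrkS : M.rk S = M.rk S' + 1 := by omega
        have hmB' : m ∉ B' := fun h => hmS' (hB'sub h)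
        have hBindep : M.rk (insert m B') = (insert m B').card := by
          have h1 := M.rk_submodular S' (insert m B')
          have h2 : S' ∪ insert m B' = S := by
            rw [← hins]
            ext x
            simp only [Finset.mem_union, Finset.mem_insert]
            constructor
            · rintro (h | h | h)
              · exact Or.inr h
              · exact Or.inl h
              · exact Or.inr (hB'sub h)
            · rintro (h | h)
              · exact Or.inr (Or.inl h)
              · exact Or.inl h
          have h3 : S' ∩ insert m B' = B' := by
            ext x
            simp only [Finset.mem_inter, Finset.mem_insert]
            constructor
            · rintro ⟨hx, (rfl | h)⟩
              · exact absurd hx hmS'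
              · exact h
            · exact fun h => ⟨hB'sub h, Or.inr h⟩
          rw [h2, h3] at h1
          have h4 := M.rk_le_card (insert m B')
          have h5 : (insert m B').card = B'.card + 1 := Finset.card_insert_of_notMem hmB'
          omega
        refine ⟨insert m B', ?_, hBindep, fun t => ?_⟩
        · intro x hx
          rcases Finset.mem_insert.1 hx with rfl | h
          · exact hmS
          · exact Finset.erase_subset m S (hB'sub h)
        by_cases htm : c m ≤ t
        · have hallS : S.filter (fun x => c x ≤ t) = S :=
            Finset.filter_true_of_mem (fun x hx => le_trans (hmax x hx) htm)
          have hallB : (insert m B').filter (fun x => c x ≤ t) = insert m B' :=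
            Finset.filter_true_of_mem (fun x hx => by
              rcases Finset.mem_insert.1 hx with rfl | h
              · exact htm
              · exact le_trans (hmax x (Finset.erase_subset m S (hB'sub h))) htm)
          rw [hallS, hallB, Finset.card_insert_of_notMem hmB', hcardB', hrkS]
        · rw [hfiltS t htm, Finset.filter_insert, if_neg htm, hB'filt t]

private lemma structCost_eq' (c : A → ℝ≥0∞) (T : Finset A) :
    structCost c T = ∫⁻ t in Set.Ioi (0:ℝ),
      ((T.card - (T.filter (fun x => c x ≤ ENNReal.ofReal t)).card : ℕ) : ℝ≥0∞) := by
  have hpt : ∀ t : ℝ, ((T.card - (T.filter (fun x => c x ≤ ENNReal.ofReal t)).card : ℕ) : ℝ≥0∞)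
      = ∑ b ∈ T, (if ENNReal.ofReal t < c b then (1:ℝ≥0∞) else 0) := by
    intro t
    have h1 : (T.filter (fun x => c x ≤ ENNReal.ofReal t)).card
        + (T.filter (fun x => ¬ c x ≤ ENNReal.ofReal t)).card = T.card :=
      Finset.card_filter_add_card_filter_not _
    have h2 : (T.filter (fun x => ¬ c x ≤ ENNReal.ofReal t)).card
        = ∑ b ∈ T, (if ENNReal.ofReal t < c b then (1:ℕ) else 0) := by
      rw [Finset.card_filter]
      exact Finset.sum_congr rfl (fun b _ => by simp [not_le])
    have h3 : (T.card - (T.filter (fun x => c x ≤ ENNReal.ofReal t)).card : ℕ)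
        = ∑ b ∈ T, (if ENNReal.ofReal t < c b then (1:ℕ) else 0) := by omega
    rw [h3, Nat.cast_sum]
    exact Finset.sum_congr rfl (fun b _ => by split <;> simp)
  calc structCost c T
      = ∑ b ∈ T, ∫⁻ t in Set.Ioi (0:ℝ), (if ENNReal.ofReal t < c b then (1:ℝ≥0∞) else 0) :=
        Finset.sum_congr rfl (fun b _ => (layer' (c b)).symm)
    _ = ∫⁻ t in Set.Ioi (0:ℝ), ∑ b ∈ T, (if ENNReal.ofReal t < c b then (1:ℝ≥0∞) else 0) :=
        (lintegral_finset_sum _ (fun b _ => layer_meas' (c b))).symm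
    _ = _ := lintegral_congr (fun t => (hpt t).symm)

private lemma cstar_eq' (M : RankMatroid A) (c : A → ℝ≥0∞) :
    cstar M.bases c = ∫⁻ t in Set.Ioi (0:ℝ),
      ((M.rk Finset.univ
        - M.rk (Finset.univ.filter (fun x => c x ≤ ENNReal.ofReal t)) : ℕ) : ℝ≥0∞) := by
  obtain ⟨B, -, hBindep, hBfilt⟩ := greedy' M c Finset.univ
  have hcardB : B.card = M.rk Finset.univ := by
    have := hBfilt ⊤
    simpa [Finset.filter_true_of_mem (fun x _ => le_top)] using this
  have hBmem : B ∈ M.bases := by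
    simp only [RankMatroid.bases, Finset.mem_filter, Finset.mem_univ, true_and]
    exact ⟨hBindep, hBindep.trans hcardB⟩
  apply le_antisymm
  · refine le_trans (iInf₂_le B hBmem) ?_
    rw [structCost_eq']
    refine le_of_eq (lintegral_congr fun t => ?_)
    rw [hBfilt (ENNReal.ofReal t), hcardB]
  · refine le_iInf₂ (fun T hT => ?_)
    simp only [RankMatroid.bases, Finset.mem_filter, Finset.mem_univ, true_and] at hT
    obtain ⟨hTindep, hTrk⟩ := hT
    rw [structCost_eq']
    refine lintegral_mono (fun t => ?_)
    refine Nat.cast_le.2 ?_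
    have h1 : (T.filter (fun x => c x ≤ ENNReal.ofReal t)).card
        = M.rk (T.filter (fun x => c x ≤ ENNReal.ofReal t)) :=
      (indep_subset' M hTindep (Finset.filter_subset _ _)).symm
    have h2 : M.rk (T.filter (fun x => c x ≤ ENNReal.ofReal t))
        ≤ M.rk (Finset.univ.filter (fun x => c x ≤ ENNReal.ofReal t)) :=
      M.rk_mono (Finset.filter_subset_filter _ (Finset.subset_univ T))
    have h3 : T.card = M.rk Finset.univ := hTindep.symm.trans hTrk
    omega

/-- For a matroid with arbitrary nonnegative costs, the VCG threshold of
an element `a` is `v(I,a) = ∫_0^∞ (rk(A(t) ∪ {a}) - rk(A(t)∖{a})) dt`. -/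
theorem matroid_vcg_threshold_integral
    (M : RankMatroid A) (c : A → ℝ) (hc : ∀ a, 0 ≤ c a) (a : A) :
    vth M.bases (fun b => ENNReal.ofReal (c b)) a
      = ∫⁻ t in Set.Ioi (0:ℝ),
          ((M.rk (insert a (Aset c t)) - M.rk ((Aset c t).erase a) : ℕ) : ℝ≥0∞) := by
  set u := M.rk Finset.univ with hu
  set g : ℝ → ℝ≥0∞ := fun t => ((u - M.rk (insert a (Aset c t)) : ℕ) : ℝ≥0∞) with hg
  set h : ℝ → ℝ≥0∞ :=
    fun t => ((M.rk (insert a (Aset c t)) - M.rk ((Aset c t).erase a) : ℕ) : ℝ≥0∞) with hh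
  have hFtop : ∀ t : ℝ, 0 < t →
      Finset.univ.filter
        (fun x => Function.update (fun b => ENNReal.ofReal (c b)) a ⊤ x ≤ ENNReal.ofReal t)
      = (Aset c t).erase a := by
    intro t ht
    ext x
    by_cases hx : x = a
    · subst hx
      simp [Function.update_self, Aset]
    · simp only [Finset.mem_filter, Finset.mem_univ, true_and, Function.update_of_ne hx,
        Finset.mem_erase, Aset, ENNReal.ofReal_le_ofReal_iff ht.le]
      tauto
  have hF0 : ∀ t : ℝ, 0 < t →
      Finset.univ.filter
        (fun x => Function.update (fun b => ENNReal.ofReal (c b)) a 0 x ≤ ENNReal.ofReal t)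
      = insert a (Aset c t) := by
    intro t ht
    ext x
    by_cases hx : x = a
    · subst hx
      simp [Function.update_self, Aset]
    · simp only [Finset.mem_filter, Finset.mem_univ, true_and, Function.update_of_ne hx,
        Finset.mem_insert, Aset, ENNReal.ofReal_le_ofReal_iff ht.le]
      tauto
  have hItop : cstar M.bases (Function.update (fun b => ENNReal.ofReal (c b)) a ⊤)
      = ∫⁻ t in Set.Ioi (0:ℝ), ((u - M.rk ((Aset c t).erase a) : ℕ) : ℝ≥0∞) := by
    rw [cstar_eq']
    exact setLIntegral_congr_fun measurableSet_Ioi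
      (fun t ht => by rw [hFtop t ht])
  have hI0 : cstar M.bases (Function.update (fun b => ENNReal.ofReal (c b)) a 0)
      = ∫⁻ t in Set.Ioi (0:ℝ), g t := by
    rw [cstar_eq']
    exact setLIntegral_congr_fun measurableSet_Ioi
      (fun t ht => by rw [hF0 t ht])
  have hdecomp : ∀ t : ℝ, ((u - M.rk ((Aset c t).erase a) : ℕ) : ℝ≥0∞) = g t + h t := by
    intro t
    have h1 : M.rk ((Aset c t).erase a) ≤ M.rk (insert a (Aset c t)) :=
      M.rk_mono (fun x hx => Finset.mem_insert_of_mem (Finset.erase_subset _ _ hx))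
    have h2 : M.rk (insert a (Aset c t)) ≤ u :=
      M.rk_mono (Finset.subset_univ _)
    rw [hg, hh, ← Nat.cast_add]
    congr 1
    omega
  have hgmono : Antitone g := by
    intro t1 t2 hle
    refine Nat.cast_le.2 ?_
    have hsub : Aset c t1 ⊆ Aset c t2 := by
      intro x hx
      simp only [Aset, Finset.mem_filter, Finset.mem_univ, true_and] at hx ⊢
      exact hx.trans hle
    have := M.rk_mono (Finset.insert_subset_insert a hsub)
    omega
  have hgmeas : Measurable g := hgmono.measurable
  have hgfin : ∫⁻ t in Set.Ioi (0:ℝ), g t ≠ ⊤ := by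
    obtain ⟨m, -, hm⟩ := Finset.exists_max_image Finset.univ c ⟨a, Finset.mem_univ a⟩
    set r := c m with hr
    have hbound : ∀ t ∈ Set.Ioi (0:ℝ),
        g t ≤ (Set.Ioc (0:ℝ) r).indicator (fun _ => (u : ℝ≥0∞)) t := by
      intro t ht
      by_cases htr : t ≤ r
      · rw [Set.indicator_of_mem (Set.mem_Ioc.2 ⟨ht, htr⟩)]
        exact Nat.cast_le.2 (Nat.sub_le _ _)
      · have hAll : Aset c t = Finset.univ := by
          refine Finset.eq_univ_iff_forall.2 (fun x => ?_)
          simp only [Aset, Finset.mem_filter, Finset.mem_univ, true_and]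
          exact (hm x (Finset.mem_univ x)).trans (le_of_not_ge htr)
        have : insert a (Aset c t) = Finset.univ := by
          rw [hAll]; simp
        rw [hg]
        simp only [this]
        simp [hu]
    refine ne_of_lt (lt_of_le_of_lt (setLIntegral_mono' measurableSet_Ioi hbound) ?_)
    refine lt_of_le_of_lt (setLIntegral_le_lintegral _ _) ?_
    rw [lintegral_indicator measurableSet_Ioc, setLIntegral_const]
    exact ENNReal.mul_lt_top (by simp) (by simp [Real.volume_Ioc])
  rw [vth, hItop, hI0, lintegral_congr hdecomp, lintegral_add_left hgmeas,
    ENNReal.add_sub_cancel_left hgfin]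
end

section
/- For a matroid on ground set A with costs i.i.d. uniform on (0,1), for 0 < t < 1 the expected number of bridges satisfies E[β(A(t))] = t · d/dt E[rk(A(t))]. -/
open MeasureTheory ProbabilityTheory ENNReal
open scoped BigOperators

variable {A : Type*} [Fintype A] [DecidableEq A]

set_option linter.unusedSectionVars false

section Aux

lemma Aset_eq_iff (c : A → ℝ) (s : ℝ) (S : Finset A) :
    Aset c s = S ↔ ∀ a, c a ≤ s ↔ a ∈ S := by
  simp [Aset, Finset.ext_iff]

lemma setEq {Ω : Type*} (X : A → Ω → ℝ) (s : ℝ) (S : Finset A) :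
    {ω | Aset (fun a => X a ω) s = S}
      = ⋂ a, (if a ∈ S then X a ⁻¹' Set.Iic s else (X a ⁻¹' Set.Iic s)ᶜ) := by
  ext ω
  simp only [Set.mem_setOf_eq, Aset_eq_iff, Set.mem_iInter]
  refine forall_congr' fun a => ?_
  by_cases h : a ∈ S <;> simp [h]

lemma measSetEq {Ω : Type*} [MeasurableSpace Ω] (X : A → Ω → ℝ) (hX : ∀ a, Measurable (X a))
    (s : ℝ) (S : Finset A) : MeasurableSet {ω | Aset (fun a => X a ω) s = S} := by
  rw [setEq]
  refine MeasurableSet.iInter fun a => ?_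
  by_cases h : a ∈ S <;> simp only [h, if_true, if_false]
  · exact (hX a) measurableSet_Iic
  · exact ((hX a) measurableSet_Iic).compl

lemma meas_le {Ω : Type*} [MeasurableSpace Ω] (μ : Measure Ω) [IsProbabilityMeasure μ]
    (X : A → Ω → ℝ) (hX : ∀ a, Measurable (X a))
    (hdist : ∀ a, μ.map (X a) = volume.restrict (Set.Ioo (0:ℝ) 1))
    {s : ℝ} (hs : s ∈ Set.Ioo (0:ℝ) 1) (a : A) :
    μ (X a ⁻¹' Set.Iic s) = ENNReal.ofReal s := by
  rw [← Measure.map_apply (hX a) measurableSet_Iic, hdist a,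
    Measure.restrict_apply measurableSet_Iic]
  have : Set.Iic s ∩ Set.Ioo (0:ℝ) 1 = Set.Ioc 0 s := by
    ext x
    simp only [Set.mem_inter_iff, Set.mem_Iic, Set.mem_Ioo, Set.mem_Ioc]
    exact ⟨fun ⟨h1, h2, _⟩ => ⟨h2, h1⟩, fun ⟨h1, h2⟩ => ⟨h2, h1, lt_of_le_of_lt h2 hs.2⟩⟩
  rw [this, Real.volume_Ioc, sub_zero]

lemma meas_gt {Ω : Type*} [MeasurableSpace Ω] (μ : Measure Ω) [IsProbabilityMeasure μ]
    (X : A → Ω → ℝ) (hX : ∀ a, Measurable (X a))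
    (hdist : ∀ a, μ.map (X a) = volume.restrict (Set.Ioo (0:ℝ) 1))
    {s : ℝ} (hs : s ∈ Set.Ioo (0:ℝ) 1) (a : A) :
    μ ((X a ⁻¹' Set.Iic s)ᶜ) = ENNReal.ofReal (1 - s) := by
  have : (X a ⁻¹' Set.Iic s)ᶜ = X a ⁻¹' Set.Ioi s := by
    ext ω; simp [Set.mem_Ioi, not_le]
  rw [this, ← Measure.map_apply (hX a) measurableSet_Ioi, hdist a,
    Measure.restrict_apply measurableSet_Ioi]
  have : Set.Ioi s ∩ Set.Ioo (0:ℝ) 1 = Set.Ioo s 1 := by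
    ext x
    simp only [Set.mem_inter_iff, Set.mem_Ioi, Set.mem_Ioo]
    exact ⟨fun ⟨h1, _, h3⟩ => ⟨h1, h3⟩, fun ⟨h1, h2⟩ => ⟨h1, hs.1.trans h1, h2⟩⟩
  rw [this, Real.volume_Ioo]

lemma meas_Aset {Ω : Type*} [MeasurableSpace Ω] (μ : Measure Ω) [IsProbabilityMeasure μ]
    (X : A → Ω → ℝ) (hX : ∀ a, Measurable (X a))
    (hindep : iIndepFun X μ)
    (hdist : ∀ a, μ.map (X a) = volume.restrict (Set.Ioo (0:ℝ) 1))
    {s : ℝ} (hs : s ∈ Set.Ioo (0:ℝ) 1) (S : Finset A) :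
    μ {ω | Aset (fun a => X a ω) s = S}
      = ENNReal.ofReal s ^ S.card * ENNReal.ofReal (1 - s) ^ (Fintype.card A - S.card) := by
  rw [setEq]
  rw [hindep.meas_iInter (fun a => ?_)]
  · have : ∀ a : A, μ (if a ∈ S then X a ⁻¹' Set.Iic s else (X a ⁻¹' Set.Iic s)ᶜ)
        = if a ∈ S then ENNReal.ofReal s else ENNReal.ofReal (1 - s) := by
      intro a
      by_cases h : a ∈ S <;> simp only [h, if_true, if_false]
      · exact meas_le μ X hX hdist hs a
      · exact meas_gt μ X hX hdist hs a
    simp only [this]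
    rw [Finset.prod_ite, Finset.prod_const, Finset.prod_const,
      Finset.filter_mem_eq_inter, Finset.univ_inter]
    have hc : (Finset.univ.filter (fun x => x ∉ S)) = Sᶜ := by
      ext x; simp
    rw [hc, Finset.card_compl]
  · by_cases h : a ∈ S <;> simp only [h, if_true, if_false]
    · exact ⟨Set.Iic s, measurableSet_Iic, rfl⟩
    · exact ⟨(Set.Iic s)ᶜ, measurableSet_Iic.compl, rfl⟩

lemma integral_Aset {Ω : Type*} [MeasurableSpace Ω] (μ : Measure Ω) [IsProbabilityMeasure μ]
    (X : A → Ω → ℝ) (hX : ∀ a, Measurable (X a)) (g : Finset A → ℝ) (s : ℝ) :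
    ∫ ω, g (Aset (fun a => X a ω) s) ∂μ
      = ∑ S : Finset A, g S * (μ {ω | Aset (fun a => X a ω) s = S}).toReal := by
  have hpt : ∀ ω, g (Aset (fun a => X a ω) s)
      = ∑ S : Finset A, Set.indicator {ω' | Aset (fun a => X a ω') s = S} (fun _ => g S) ω := by
    intro ω
    rw [Finset.sum_congr rfl (fun S _ => Set.indicator_apply _ _ _)]
    simp only [Set.mem_setOf_eq]
    rw [Finset.sum_ite_eq (Finset.univ : Finset (Finset A)) (Aset (fun a => X a ω) s)
      (fun S => g S)]
    · simp
  simp only [hpt]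
  rw [integral_finset_sum]
  · refine Finset.sum_congr rfl fun S _ => ?_
    rw [integral_indicator_const (g S) (measSetEq X hX s S), smul_eq_mul, mul_comm, measureReal_def]
  · intro S _
    exact (integrable_const (g S)).indicator (measSetEq X hX s S)

lemma integral_Aset' {Ω : Type*} [MeasurableSpace Ω] (μ : Measure Ω) [IsProbabilityMeasure μ]
    (X : A → Ω → ℝ) (hX : ∀ a, Measurable (X a))
    (hindep : iIndepFun X μ)
    (hdist : ∀ a, μ.map (X a) = volume.restrict (Set.Ioo (0:ℝ) 1))
    (g : Finset A → ℝ) {s : ℝ} (hs : s ∈ Set.Ioo (0:ℝ) 1) :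
    ∫ ω, g (Aset (fun a => X a ω) s) ∂μ
      = ∑ S : Finset A, g S * (s ^ S.card * (1 - s) ^ (Fintype.card A - S.card)) := by
  rw [integral_Aset μ X hX g s]
  refine Finset.sum_congr rfl fun S _ => ?_
  rw [meas_Aset μ X hX hindep hdist hs S]
  rw [ENNReal.toReal_mul, ENNReal.toReal_pow, ENNReal.toReal_pow,
    ENNReal.toReal_ofReal hs.1.le, ENNReal.toReal_ofReal (by linarith [hs.2] : (0:ℝ) ≤ 1 - s)]

lemma sum_erase_reindex (f : Finset A → A → ℝ) :
    ∑ T : Finset A, ∑ a ∈ T, f (T.erase a) a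
      = ∑ S : Finset A, ∑ a ∈ Sᶜ, f S a := by
  rw [Finset.sum_sigma', Finset.sum_sigma']
  refine Finset.sum_nbij' (fun p => ⟨p.1.erase p.2, p.2⟩) (fun p => ⟨insert p.2 p.1, p.2⟩)
    ?_ ?_ ?_ ?_ ?_
  · rintro ⟨T, a⟩ hp
    simp only [Finset.mem_sigma, Finset.mem_univ, true_and] at hp ⊢
    simp [Finset.mem_compl]
  · rintro ⟨S, a⟩ hp
    simp only [Finset.mem_sigma, Finset.mem_univ, true_and, Finset.mem_compl] at hp ⊢
    exact Finset.mem_insert_self a S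
  · rintro ⟨T, a⟩ hp
    simp only [Finset.mem_sigma, Finset.mem_univ, true_and] at hp
    simp [Finset.insert_erase hp]
  · rintro ⟨S, a⟩ hp
    simp only [Finset.mem_sigma, Finset.mem_univ, true_and, Finset.mem_compl] at hp
    simp [Finset.erase_insert hp]
  · rintro ⟨T, a⟩ hp
    rfl

section MatroidAux
variable (M : RankMatroid A)

lemma rk_empty : M.rk ∅ = 0 :=
  Nat.le_zero.mp (le_trans (M.rk_le_card ∅) (by simp))

lemma rk_le_erase_add_one {T : Finset A} {a : A} (ha : a ∈ T) :
    M.rk T ≤ M.rk (T.erase a) + 1 := by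
  have h := M.rk_submodular (T.erase a) {a}
  have h1 : (T.erase a) ∪ {a} = T := by
    rw [Finset.union_comm, ← Finset.insert_eq, Finset.insert_erase ha]
  have h2 : (T.erase a) ∩ {a} = ∅ := by
    ext x; simp +contextual [Finset.mem_inter]
  rw [h1, h2, rk_empty, Nat.add_zero] at h
  have h3 : M.rk {a} ≤ 1 := le_trans (M.rk_le_card {a}) (by simp)
  omega

lemma sum_rk_diff (T : Finset A) :
    ∑ a ∈ T, ((M.rk T : ℝ) - (M.rk (T.erase a) : ℝ)) = (M.beta T : ℝ) := by
  have : ∀ a ∈ T, ((M.rk T : ℝ) - (M.rk (T.erase a) : ℝ))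
      = if M.rk (T.erase a) < M.rk T then (1:ℝ) else 0 := by
    intro a ha
    have hle := M.rk_mono (Finset.erase_subset a T)
    have hub := rk_le_erase_add_one M ha
    by_cases h : M.rk (T.erase a) < M.rk T
    · have : M.rk T = M.rk (T.erase a) + 1 := by omega
      rw [if_pos h, this]; push_cast; ring
    · have : M.rk T = M.rk (T.erase a) := by omega
      rw [if_neg h, this]; ring
  rw [Finset.sum_congr rfl this, Finset.sum_ite, Finset.sum_const, Finset.sum_const]
  simp [RankMatroid.beta]

end MatroidAux

end Aux


lemma cast_mul_pow_pred (k : ℕ) (t : ℝ) : (k:ℝ) * t ^ (k-1) * t = (k:ℝ) * t ^ k := by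
  rcases Nat.eq_zero_or_pos k with h | h
  · simp [h]
  · rw [mul_assoc, ← pow_succ, Nat.sub_add_cancel h]

lemma key_algebra (M : RankMatroid A) {t : ℝ} (ht : t ≠ 0) :
    ∑ S : Finset A, (M.rk S : ℝ) *
      (((S.card : ℝ) * t ^ (S.card - 1)) * (1 - t) ^ (Fintype.card A - S.card)
        + t ^ S.card * (((Fintype.card A - S.card : ℕ) : ℝ)
            * (1 - t) ^ (Fintype.card A - S.card - 1) * (-1)))
    = (∑ S : Finset A, (M.beta S : ℝ) * (t ^ S.card * (1 - t) ^ (Fintype.card A - S.card))) / t := by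
  set n := Fintype.card A with hn
  rw [eq_div_iff ht, Finset.sum_mul]
  have hterm : ∀ S : Finset A, (M.rk S : ℝ) *
      (((S.card : ℝ) * t ^ (S.card - 1)) * (1 - t) ^ (n - S.card)
        + t ^ S.card * (((n - S.card : ℕ) : ℝ) * (1 - t) ^ (n - S.card - 1) * (-1))) * t
      = (∑ _a ∈ S, (M.rk S : ℝ) * (t ^ S.card * (1 - t) ^ (n - S.card)))
        - (∑ _a ∈ Sᶜ, (M.rk S : ℝ) * (t ^ (S.card + 1) * (1 - t) ^ (n - S.card - 1))) := by
    intro S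
    rw [Finset.sum_const, Finset.sum_const, Finset.card_compl, nsmul_eq_mul, nsmul_eq_mul,
      ← hn, pow_succ]
    linear_combination ((1 - t) ^ (n - S.card)) * (M.rk S : ℝ) * cast_mul_pow_pred S.card t
  rw [Finset.sum_congr rfl (fun S _ => hterm S), Finset.sum_sub_distrib]
  rw [← sum_erase_reindex (fun S a => (M.rk S : ℝ) * (t ^ (S.card + 1) * (1 - t) ^ (n - S.card - 1)))]
  have hsecond : ∀ T : Finset A, ∀ a ∈ T,
      (M.rk (T.erase a) : ℝ) * (t ^ ((T.erase a).card + 1) * (1 - t) ^ (n - (T.erase a).card - 1))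
      = (M.rk (T.erase a) : ℝ) * (t ^ T.card * (1 - t) ^ (n - T.card)) := by
    intro T a ha
    have hcard : T.card ≥ 1 := Finset.card_pos.mpr ⟨a, ha⟩
    rw [Finset.card_erase_of_mem ha]
    have e1 : T.card - 1 + 1 = T.card := by omega
    have e2 : n - (T.card - 1) - 1 = n - T.card := by omega
    rw [e1, e2]
  rw [Finset.sum_congr rfl (fun T _ => Finset.sum_congr rfl (hsecond T)), ← Finset.sum_sub_distrib]
  refine Finset.sum_congr rfl fun T _ => ?_
  rw [← Finset.sum_sub_distrib]
  have : ∀ a ∈ T, (M.rk T : ℝ) * (t ^ T.card * (1 - t) ^ (n - T.card))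
      - (M.rk (T.erase a) : ℝ) * (t ^ T.card * (1 - t) ^ (n - T.card))
      = ((M.rk T : ℝ) - (M.rk (T.erase a) : ℝ)) * (t ^ T.card * (1 - t) ^ (n - T.card)) := by
    intro a _; ring
  rw [Finset.sum_congr rfl this, ← Finset.sum_mul, sum_rk_diff]


/-- With i.i.d. `U(0,1)` costs, for `0 < t < 1` the expected number of
bridges satisfies `E[β(A(t))] = t · (d/dt) E[rk(A(t))]`, i.e. `s ↦ E[rk(A(s))]` has
derivative `E[β(A(t))]/t` at `t`. -/
theorem expected_bridges_eq_t_mul_deriv_expected_rank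
    {Ω : Type*} [MeasurableSpace Ω] (μ : Measure Ω) [IsProbabilityMeasure μ]
    (M : RankMatroid A)
    (X : A → Ω → ℝ) (hX : ∀ a, Measurable (X a))
    (hindep : iIndepFun X μ)
    (hdist : ∀ a, μ.map (X a) = volume.restrict (Set.Ioo (0:ℝ) 1))
    (t : ℝ) (ht : t ∈ Set.Ioo (0:ℝ) 1) :
    HasDerivAt (fun s : ℝ => ∫ ω, ((M.rk (Aset (fun a => X a ω) s) : ℝ)) ∂μ)
      ((∫ ω, ((M.beta (Aset (fun a => X a ω) t) : ℝ)) ∂μ) / t) t := by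
  obtain ⟨ht0, ht1⟩ := ht
  set n := Fintype.card A with hn
  have hβ : ∫ ω, ((M.beta (Aset (fun a => X a ω) t) : ℝ)) ∂μ
      = ∑ S : Finset A, (M.beta S : ℝ) * (t ^ S.card * (1 - t) ^ (n - S.card)) :=
    integral_Aset' μ X hX hindep hdist (fun S => (M.beta S : ℝ)) ⟨ht0, ht1⟩
  have hD : HasDerivAt
      (fun s : ℝ => ∑ S : Finset A, (M.rk S : ℝ) * (s ^ S.card * (1 - s) ^ (n - S.card)))
      (∑ S : Finset A, (M.rk S : ℝ) *
        (((S.card : ℝ) * t ^ (S.card - 1)) * (1 - t) ^ (n - S.card)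
          + t ^ S.card * (((n - S.card : ℕ) : ℝ) * (1 - t) ^ (n - S.card - 1) * (-1)))) t := by
    apply HasDerivAt.fun_sum
    intro S _
    have h1 : HasDerivAt (fun s : ℝ => s ^ S.card) ((S.card : ℝ) * t ^ (S.card - 1)) t :=
      hasDerivAt_pow _ _
    have h2 : HasDerivAt (fun s : ℝ => (1 - s) ^ (n - S.card))
        (((n - S.card : ℕ) : ℝ) * (1 - t) ^ (n - S.card - 1) * (-1)) t := by
      have hinner : HasDerivAt (fun s : ℝ => 1 - s) (-1) t := by
        simpa using (hasDerivAt_id t).const_sub 1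
      simpa [Function.comp_def] using (hasDerivAt_pow (n - S.card) (1 - t)).comp t hinner
    exact (h1.mul h2).const_mul _
  rw [hβ, ← key_algebra M (ne_of_gt ht0)]
  refine hD.congr_of_eventuallyEq ?_
  filter_upwards [Ioo_mem_nhds ht0 ht1] with s hs
  exact integral_Aset' μ X hX hindep hdist (fun S => (M.rk S : ℝ)) hs
end
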